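/- arXiv:1803.11549 — 6 statements merged into one kernel-verified Lean document; each statement's English description precedes it below -/
import Mathlib

section
/- Let k be an algebraically closed field of characteristic zero, V a finite-dimensional ℤ/2ℤ-graded vector space over k equipped with an odd symmetric non-degenerate scalar product g, and I an odd anti-self-adjoint operator on V. Then V decomposes as a direct sum of pairwise g-orthogonal, I-invariant graded subspaces, each of which is of type 1_k for some k ≥ 1, of type 2_k for some k ≥ 1, or of type 3 (i.e. I restricts to an invertible operator on it). -/
/-- A finite-dimensional ℤ/2ℤ-graded vector space `V = V₀ ⊕ V₁` equipped with an odd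
symmetric non-degenerate scalar product `g`: `g` vanishes on `V₀ × V₀` and `V₁ × V₁`,
is symmetric, and non-degenerate (hence a perfect pairing between `V₀` and `V₁`). -/
structure OddSP (k V : Type*) [Field k] [AddCommGroup V] [Module k V] where
  V0 : Submodule k V
  V1 : Submodule k V
  compl : IsCompl V0 V1
  g : V →ₗ[k] V →ₗ[k] k
  symm : ∀ x y, g x y = g y x
  zero00 : ∀ x ∈ V0, ∀ y ∈ V0, g x y = 0
  zero11 : ∀ x ∈ V1, ∀ y ∈ V1, g x y = 0
  nondeg : ∀ x, (∀ y, g x y = 0) → x = 0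

variable {k V : Type*} [Field k] [AddCommGroup V] [Module k V]

/-- `v` is homogeneous of parity `p` (mod 2). -/
def OddSP.Homog (S : OddSP k V) (p : ℕ) (v : V) : Prop :=
  if p % 2 = 0 then v ∈ S.V0 else v ∈ S.V1

/-- A linear operator is odd if it exchanges the even and odd parts. -/
def OddSP.IsOddOp (S : OddSP k V) (I : V →ₗ[k] V) : Prop :=
  (∀ x ∈ S.V0, I x ∈ S.V1) ∧ (∀ x ∈ S.V1, I x ∈ S.V0)

/-- `g(Ix,y) + (−1)^{|x|} g(x,Iy) = 0` for homogeneous `x`. -/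
def OddSP.IsAntiSelfAdj (S : OddSP k V) (I : V →ₗ[k] V) : Prop :=
  ∀ (p : ℕ) (x : V), S.Homog p x → ∀ y, S.g (I x) y + (-1 : k) ^ p * S.g x (I y) = 0

/-- `g(Ix,y) = (−1)^{|x|} g(x,Iy)` for homogeneous `x`. -/
def OddSP.IsSelfAdj (S : OddSP k V) (I : V →ₗ[k] V) : Prop :=
  ∀ (p : ℕ) (x : V), S.Homog p x → ∀ y, S.g (I x) y = (-1 : k) ^ p * S.g x (I y)

/-- `U` is a graded subspace. -/
def OddSP.IsGraded (S : OddSP k V) (U : Submodule k V) : Prop :=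
  U = (U ⊓ S.V0) ⊔ (U ⊓ S.V1)

/-- `U` is of type `1_K`: spanned by a single chain `v, Iv, …, I^{2K−1}v` with `v`
homogeneous of parity `K mod 2`, `I^{2K} v = 0`, and the prescribed Gram matrix. -/
def OddSP.IsType1 (S : OddSP k V) (I : V →ₗ[k] V) (K : ℕ) (U : Submodule k V) : Prop :=
  ∃ v : V, S.Homog K v ∧ (I ^ (2 * K)) v = 0 ∧
    LinearIndependent k (fun m : Fin (2 * K) => (I ^ (m : ℕ)) v) ∧
    Submodule.span k (Set.range fun m : Fin (2 * K) => (I ^ (m : ℕ)) v) = U ∧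
    ∀ m < 2 * K, ∀ m' < 2 * K,
      S.g ((I ^ m) v) ((I ^ m') v) =
        if m + m' = 2 * K - 1 then (-1 : k) ^ (m * (K % 2) + m * (m + 1) / 2) else 0

/-- `U` is of type `2_K`: spanned by two chains `v, Iv, …, I^{K−1}v` and
`u, Iu, …, I^{K−1}u` with `v, u` homogeneous, `|v| + |u| ≡ K (mod 2)`,
`I^K v = I^K u = 0`, and the prescribed Gram matrix. -/
def OddSP.IsType2 (S : OddSP k V) (I : V →ₗ[k] V) (K : ℕ) (U : Submodule k V) : Prop :=
  ∃ (v u : V) (pv pu : ℕ), S.Homog pv v ∧ S.Homog pu u ∧ (pv + pu) % 2 = K % 2 ∧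
    (I ^ K) v = 0 ∧ (I ^ K) u = 0 ∧
    LinearIndependent k
      (Sum.elim (fun m : Fin K => (I ^ (m : ℕ)) v) (fun m : Fin K => (I ^ (m : ℕ)) u)) ∧
    Submodule.span k
      (Set.range (Sum.elim (fun m : Fin K => (I ^ (m : ℕ)) v)
        (fun m : Fin K => (I ^ (m : ℕ)) u))) = U ∧
    (∀ m < K, ∀ m' < K, S.g ((I ^ m) v) ((I ^ m') v) = 0) ∧
    (∀ m < K, ∀ m' < K, S.g ((I ^ m) u) ((I ^ m') u) = 0) ∧
    (∀ m < K, ∀ m' < K, S.g ((I ^ m) v) ((I ^ m') u) =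
      if m + m' = K - 1 then (-1 : k) ^ (m * pv + m * (m + 1) / 2) else 0)

/-- `U` is of type `3`: `I` restricts to an invertible operator on `U`. -/
def OddSP.IsType3 (I : V →ₗ[k] V) (U : Submodule k V) : Prop :=
  (∀ x ∈ U, I x ∈ U) ∧ (∀ x ∈ U, I x = 0 → x = 0) ∧ (∀ y ∈ U, ∃ x ∈ U, I x = y)

/-
Fitting's lemma splits `V = ker I^n ⊕ range I^n` for large `n`. Both summands are graded and
`I`-invariant, and they are `g`-orthogonal because anti-self-adjointness moves `I^n` across `g`
up to a sign; hence both are nondegenerate, and `I` is invertible on the range.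

On an invariant graded nondegenerate subspace `W` on which `I` is nilpotent of index `K`, the
pairing `(x, y) ↦ g x (I^(K-1) y)` is nonzero. If it is nonzero on the diagonal at some homogeneous
`w`, adding multiples of `I^e w` kills the pairings `g w (I^t w)` for `t < K - 1` from the top
down, and rescaling by a square root yields a type `1_(K/2)` chain. Otherwise it pairs two
homogeneous vectors `v`, `u`, and the same corrections produce a type `2_K` pair of chains. In
both cases the chains span a nondegenerate block (its Gram matrix is antidiagonal), whose
orthogonal complement in `W` is again invariant, graded and nondegenerate, so induction on `W`
finishes the proof.
-/

namespace OddSP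

variable {S : OddSP k V} {I : V →ₗ[k] V} {p q r : ℕ} {a b x y z : V} {U W : Submodule k V}

section Parity

variable (S) in
def part (p : ℕ) : Submodule k V := if p % 2 = 0 then S.V0 else S.V1

theorem homog_iff : S.Homog p x ↔ x ∈ S.part p := by
  unfold Homog part
  split_ifs <;> rfl

theorem Homog.of_mod_two_eq (h : p % 2 = q % 2) (hx : S.Homog p x) : S.Homog q x := by
  rwa [Homog, ← h]

theorem Homog.add (hx : S.Homog p x) (hy : S.Homog p y) : S.Homog p (x + y) :=
  homog_iff.2 <| add_mem (homog_iff.1 hx) (homog_iff.1 hy)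

theorem Homog.smul (c : k) (hx : S.Homog p x) : S.Homog p (c • x) :=
  homog_iff.2 <| Submodule.smul_mem _ c (homog_iff.1 hx)

theorem disjoint_part_succ (p : ℕ) : Disjoint (S.part p) (S.part (p + 1)) := by
  unfold part
  rcases Nat.mod_two_eq_zero_or_one p with h | h
  · simpa [h, Nat.add_mod] using S.compl.disjoint
  · simpa [h, Nat.add_mod] using S.compl.disjoint.symm

theorem exists_homog_add (p : ℕ) (x : V) :
    ∃ a b, S.Homog p a ∧ S.Homog (p + 1) b ∧ a + b = x := by
  obtain ⟨a, b, hab, -⟩ := Submodule.existsUnique_add_of_isCompl S.compl x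
  rcases Nat.mod_two_eq_zero_or_one p with h | h
  · exact ⟨a, b, by simp [Homog, h], by simp [Homog, Nat.add_mod, h], hab⟩
  · exact ⟨b, a, by simp [Homog, h], by simp [Homog, Nat.add_mod, h], by rw [add_comm, hab]⟩

theorem Homog.eq_of_add_eq {a' b' : V} (ha : S.Homog p a) (hb : S.Homog (p + 1) b)
    (ha' : S.Homog p a') (hb' : S.Homog (p + 1) b') (h : a + b = a' + b') : a = a' := by
  have hmem : a - a' = b' - b := by rw [sub_eq_sub_iff_add_eq_add, h, add_comm]
  refine sub_eq_zero.1 <| Submodule.disjoint_def.1 (S.disjoint_part_succ p) _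
    (sub_mem (homog_iff.1 ha) (homog_iff.1 ha')) ?_
  rw [hmem]
  exact sub_mem (homog_iff.1 hb') (homog_iff.1 hb)

theorem g_eq_zero_of_homog (hx : S.Homog p x) (hy : S.Homog q y) (h : p % 2 = q % 2) :
    S.g x y = 0 := by
  unfold Homog at hx hy
  rw [← h] at hy
  split_ifs at hx hy
  · exact S.zero00 x hx y hy
  · exact S.zero11 x hx y hy

theorem mod_two_eq_one_of_g_ne_zero (hx : S.Homog p x) (hy : S.Homog q y) (h : S.g x y ≠ 0) :
    (p + q) % 2 = 1 := by
  by_contra h'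
  exact h (g_eq_zero_of_homog hx hy (by omega))

theorem Homog.apply (hodd : S.IsOddOp I) (hx : S.Homog p x) : S.Homog (p + 1) (I x) := by
  unfold Homog at hx ⊢
  rcases Nat.mod_two_eq_zero_or_one p with h | h
  · simpa [h, Nat.add_mod] using hodd.1 x (by simpa [h] using hx)
  · simpa [h, Nat.add_mod] using hodd.2 x (by simpa [h] using hx)

theorem Homog.pow_apply (hodd : S.IsOddOp I) (hx : S.Homog p x) (m : ℕ) :
    S.Homog (p + m) ((I ^ m) x) := by
  induction m with
  | zero => simpa using hx
  | succ m ih => rw [pow_succ', Module.End.mul_apply, ← add_assoc]; exact ih.apply hodd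

end Parity

section Grading

theorem IsGraded.exists_homog_add (hW : S.IsGraded W) (p : ℕ) (hx : x ∈ W) :
    ∃ a ∈ W, ∃ b ∈ W, S.Homog p a ∧ S.Homog (p + 1) b ∧ a + b = x := by
  rw [hW] at hx
  obtain ⟨c, ⟨hcW, hc⟩, d, ⟨hdW, hd⟩, rfl⟩ := Submodule.mem_sup.1 hx
  rcases Nat.mod_two_eq_zero_or_one p with h | h
  · exact ⟨c, hcW, d, hdW, by simpa [Homog, h], by simpa [Homog, Nat.add_mod, h], rfl⟩
  · exact ⟨d, hdW, c, hcW, by simpa [Homog, h], by simpa [Homog, Nat.add_mod, h], add_comm d c⟩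

theorem IsGraded.homog_mem (hW : S.IsGraded W) (ha : S.Homog p a) (hb : S.Homog (p + 1) b)
    (h : a + b ∈ W) : a ∈ W := by
  obtain ⟨a', ha'W, b', -, ha', hb', hab⟩ := hW.exists_homog_add p h
  rwa [Homog.eq_of_add_eq ha hb ha' hb' hab.symm]

theorem isGraded_of_homog_mem (h : ∀ a b, S.Homog 0 a → S.Homog 1 b → a + b ∈ W → a ∈ W) :
    S.IsGraded W := by
  refine le_antisymm (fun x hx => ?_) (sup_le inf_le_left inf_le_left)
  obtain ⟨a, b, ha, hb, rfl⟩ := S.exists_homog_add 0 x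
  have haW := h a b ha hb hx
  have hbW : b ∈ W := by simpa using sub_mem hx haW
  exact Submodule.add_mem_sup ⟨haW, by simpa [Homog] using ha⟩ ⟨hbW, by simpa [Homog] using hb⟩

theorem IsGraded.inf (hU : S.IsGraded U) (hW : S.IsGraded W) : S.IsGraded (U ⊓ W) :=
  isGraded_of_homog_mem fun _ _ ha hb h => ⟨hU.homog_mem ha hb h.1, hW.homog_mem ha hb h.2⟩

theorem isGraded_span {s : Set V} (h : ∀ v ∈ s, ∃ p, S.Homog p v) :
    S.IsGraded (Submodule.span k s) := by
  refine le_antisymm ?_ (sup_le inf_le_left inf_le_left)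
  rw [Submodule.span_le]
  intro v hv
  obtain ⟨p, hp⟩ := h v hv
  unfold Homog at hp
  split_ifs at hp
  · exact Submodule.mem_sup_left ⟨Submodule.subset_span hv, hp⟩
  · exact Submodule.mem_sup_right ⟨Submodule.subset_span hv, hp⟩

theorem IsGraded.exists_homog_apply_ne_zero {M : Type*} [AddCommGroup M] [Module k M]
    (hW : S.IsGraded W) (f : V →ₗ[k] M) (hx : x ∈ W) (hfx : f x ≠ 0) :
    ∃ p a, a ∈ W ∧ S.Homog p a ∧ f a ≠ 0 := by
  obtain ⟨a, haW, b, hbW, ha, hb, rfl⟩ := hW.exists_homog_add 0 hx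
  by_cases hfa : f a = 0
  · exact ⟨1, b, hbW, hb, by simpa [hfa] using hfx⟩
  · exact ⟨0, a, haW, ha, hfa⟩

theorem isGraded_ker_pow (hodd : S.IsOddOp I) (n : ℕ) : S.IsGraded (LinearMap.ker (I ^ n)) := by
  refine isGraded_of_homog_mem fun a b ha hb h => ?_
  rw [LinearMap.mem_ker, map_add, ← zero_add 0] at h
  have hna := (ha.pow_apply hodd n).of_mod_two_eq (q := n) (by omega)
  have hnb := (hb.pow_apply hodd n).of_mod_two_eq (q := n + 1) (by omega)
  exact Homog.eq_of_add_eq hna hnb (homog_iff.2 (zero_mem _)) (homog_iff.2 (zero_mem _)) h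

theorem isGraded_range_pow (hodd : S.IsOddOp I) (n : ℕ) :
    S.IsGraded (LinearMap.range (I ^ n)) := by
  refine isGraded_of_homog_mem fun a b ha hb ⟨z, hz⟩ => ?_
  obtain ⟨c, d, hc, hd, rfl⟩ := S.exists_homog_add n z
  rw [map_add] at hz
  have hnc := (hc.pow_apply hodd n).of_mod_two_eq (q := 0) (by omega)
  have hnd := (hd.pow_apply hodd n).of_mod_two_eq (q := 1) (by omega)
  exact ⟨c, Homog.eq_of_add_eq hnc hnd ha hb hz⟩

end Grading

section Adjunction

def adjSign (p m : ℕ) : k := (-1) ^ (m * p + m * (m + 1) / 2)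

theorem adjSign_succ (p m : ℕ) : (adjSign p (m + 1) : k) = adjSign (p + 1) m * (-1) ^ (p + 1) := by
  have : (m + 1) * (m + 1 + 1) = m * (m + 1) + 2 * (m + 1) := by ring
  rw [adjSign, adjSign, ← pow_add, this, Nat.add_mul_div_left _ _ two_pos]
  ring_nf

theorem adjSign_ne_zero (p m : ℕ) : (adjSign p m : k) ≠ 0 :=
  pow_ne_zero _ (neg_ne_zero.2 one_ne_zero)

theorem adjSign_congr (h : p % 2 = q % 2) (m : ℕ) : (adjSign p m : k) = adjSign q m := by
  rw [adjSign, adjSign, neg_one_pow_eq_pow_mod_two, neg_one_pow_eq_pow_mod_two (_ * q + _),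
    Nat.add_mod, Nat.mul_mod, h, ← Nat.mul_mod, ← Nat.add_mod]

theorem pow_apply_pow_apply (j e : ℕ) (y : V) : (I ^ j) ((I ^ e) y) = (I ^ (j + e)) y := by
  rw [pow_add, Module.End.mul_apply]

theorem g_pow_apply_left (hodd : S.IsOddOp I) (hasa : S.IsAntiSelfAdj I) (hx : S.Homog p x)
    (m : ℕ) (y : V) : S.g ((I ^ m) x) y = adjSign p m * S.g x ((I ^ m) y) := by
  induction m generalizing p x with
  | zero => simp [adjSign]
  | succ m ih =>
    have hI : S.g (I x) ((I ^ m) y) = (-1) ^ (p + 1) * S.g x ((I ^ (m + 1)) y) := by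
      rw [pow_succ' I m, Module.End.mul_apply, pow_succ]
      linear_combination hasa p x hx ((I ^ m) y)
    rw [show (I ^ (m + 1)) x = (I ^ m) (I x) by rw [pow_succ, Module.End.mul_apply],
      ih (hx.apply hodd), hI, adjSign_succ, mul_assoc]

theorem g_pow_apply_pow_apply (hodd : S.IsOddOp I) (hasa : S.IsAntiSelfAdj I)
    (hx : S.Homog p x) (m j : ℕ) (y : V) :
    S.g ((I ^ m) x) ((I ^ j) y) = adjSign p m * S.g x ((I ^ (m + j)) y) := by
  rw [g_pow_apply_left hodd hasa hx, pow_apply_pow_apply]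

theorem g_pow_apply_swap (hodd : S.IsOddOp I) (hasa : S.IsAntiSelfAdj I) (hx : S.Homog p x)
    (j : ℕ) (y : V) : S.g y ((I ^ j) x) = adjSign p j * S.g x ((I ^ j) y) := by
  rw [S.symm, g_pow_apply_left hodd hasa hx]

theorem adjSign_eq_one_of_g_ne_zero (hodd : S.IsOddOp I) (hasa : S.IsAntiSelfAdj I)
    {t : ℕ} (hx : S.Homog p x) (h : S.g x ((I ^ t) x) ≠ 0) : (adjSign p t : k) = 1 := by
  have := g_pow_apply_swap hodd hasa hx t x
  exact (mul_eq_right₀ h).1 this.symm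

theorem pow_apply_eq_zero_of_le {K j : ℕ} (hy : (I ^ K) y = 0) (h : K ≤ j) : (I ^ j) y = 0 := by
  rw [← Nat.sub_add_cancel h, pow_add, Module.End.mul_apply, hy, map_zero]

theorem g_pow_apply_eq_zero_of_le {K j : ℕ} (hy : (I ^ K) y = 0) (h : K ≤ j) :
    S.g x ((I ^ j) y) = 0 := by
  rw [pow_apply_eq_zero_of_le hy h, map_zero]

theorem pow_apply_mem (hWI : ∀ x ∈ W, I x ∈ W) (m : ℕ) (hx : x ∈ W) : (I ^ m) x ∈ W := by
  induction m with
  | zero => simpa using hx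
  | succ m ih => rw [pow_succ', Module.End.mul_apply]; exact hWI _ ih

end Adjunction

section Reducing

variable (S) in
def orthogonal (U : Submodule k V) : Submodule k V := LinearMap.BilinForm.orthogonal S.g U

theorem le_orthogonal_comm {U' : Submodule k V} : U ≤ S.orthogonal U' ↔ U' ≤ S.orthogonal U :=
  ⟨fun h x hx y hy => (S.symm y x).trans (h hy x hx),
    fun h x hx y hy => (S.symm y x).trans (h hy x hx)⟩

theorem disjoint_orthogonal_top : Disjoint ⊤ (S.orthogonal ⊤) :=
  Submodule.disjoint_def.2 fun x _ hx => S.nondeg x fun y => (S.symm x y).trans (hx y trivial)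

theorem IsGraded.orthogonal (hU : S.IsGraded U) : S.IsGraded (S.orthogonal U) := by
  refine isGraded_of_homog_mem fun a b ha hb hab z hz => ?_
  obtain ⟨z₀, -, z₁, hz₁U, hz₀, hz₁, rfl⟩ := hU.exists_homog_add 0 hz
  have h₁ : S.g z₁ (a + b) = 0 := hab z₁ hz₁U
  rw [map_add, LinearMap.add_apply, g_eq_zero_of_homog hz₀ ha rfl, zero_add]
  rwa [map_add, g_eq_zero_of_homog hz₁ hb rfl, add_zero] at h₁

theorem g_apply_eq_zero_of_homog (hasa : S.IsAntiSelfAdj I) (hz : S.Homog p z)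
    (h : S.g (I z) x = 0) : S.g z (I x) = 0 := by
  have := hasa p z hz x
  rw [h, zero_add] at this
  exact (mul_eq_zero.1 this).resolve_left (pow_ne_zero _ (neg_ne_zero.2 one_ne_zero))

theorem orthogonal_mapsTo (hasa : S.IsAntiSelfAdj I) (hU : S.IsGraded U)
    (hUI : ∀ x ∈ U, I x ∈ U) : ∀ x ∈ S.orthogonal U, I x ∈ S.orthogonal U := by
  intro x hx z hz
  obtain ⟨z₀, hz₀U, z₁, hz₁U, hz₀, hz₁, rfl⟩ := hU.exists_homog_add 0 hz
  rw [map_add, LinearMap.add_apply, g_apply_eq_zero_of_homog hasa hz₀ (hx _ (hUI _ hz₀U)),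
    g_apply_eq_zero_of_homog hasa hz₁ (hx _ (hUI _ hz₁U)), add_zero]

theorem disjoint_orthogonal_of_sup_eq {U' : Submodule k V} (hW : Disjoint W (S.orthogonal W))
    (hsup : U ⊔ U' = W) (horth : U ≤ S.orthogonal U') : Disjoint U' (S.orthogonal U') := by
  refine Submodule.disjoint_def.2 fun x hx hx' => Submodule.disjoint_def.1 hW x
    (hsup ▸ Submodule.mem_sup_right hx) fun w hw => ?_
  obtain ⟨a, ha, b, hb, rfl⟩ := Submodule.mem_sup.1 (hsup ▸ hw)
  rw [map_add, LinearMap.add_apply, S.symm, horth ha x hx, hx' b hb, add_zero]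

theorem sup_orthogonal_inf [FiniteDimensional k V] (hU : Disjoint U (S.orthogonal U))
    (hUW : U ≤ W) : U ⊔ S.orthogonal U ⊓ W = W := by
  have hc : IsCompl U (S.orthogonal U) :=
    (LinearMap.BilinForm.isCompl_orthogonal_iff_disjoint fun x y h => (S.symm y x).trans h).2 hU
  rw [← sup_inf_assoc_of_le _ hUW, hc.sup_eq_top, top_inf_eq]

structure IsReducing (S : OddSP k V) (I : V →ₗ[k] V) (U : Submodule k V) : Prop where
  mapsTo : ∀ x ∈ U, I x ∈ U
  graded : S.IsGraded U
  disjoint : Disjoint U (S.orthogonal U)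

theorem IsReducing.orthogonal_inf [FiniteDimensional k V] (hasa : S.IsAntiSelfAdj I)
    (hU : S.IsReducing I U) (hW : S.IsReducing I W) (hUW : U ≤ W) :
    S.IsReducing I (S.orthogonal U ⊓ W) where
  mapsTo x hx := ⟨orthogonal_mapsTo hasa hU.graded hU.mapsTo x hx.1, hW.mapsTo x hx.2⟩
  graded := hU.graded.orthogonal.inf hW.graded
  disjoint := disjoint_orthogonal_of_sup_eq hW.disjoint (sup_orthogonal_inf hU.disjoint hUW)
    (le_orthogonal_comm.1 inf_le_left)

end Reducing

section Decomposition

structure IsOrthogonalDecomposition (S : OddSP k V) (I : V →ₗ[k] V) (W : Submodule k V)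
    {n : ℕ} (U : Fin n → Submodule k V) : Prop where
  iSup_eq : ⨆ i, U i = W
  orthogonal : ∀ i j, i ≠ j → U i ≤ S.orthogonal (U j)
  reducing : ∀ i, S.IsReducing I (U i)

theorem isOrthogonalDecomposition_bot :
    S.IsOrthogonalDecomposition I ⊥ (Fin.elim0 : Fin 0 → Submodule k V) :=
  ⟨iSup_of_empty _, fun i => i.elim0, fun i => i.elim0⟩

theorem IsOrthogonalDecomposition.cons {n : ℕ} {U₀ : Submodule k V} {Us : Fin n → Submodule k V}
    (h : S.IsOrthogonalDecomposition I W Us) (hU₀ : S.IsReducing I U₀)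
    (horth : U₀ ≤ S.orthogonal W) :
    S.IsOrthogonalDecomposition I (U₀ ⊔ W) (Fin.cons U₀ Us) where
  iSup_eq := by
    apply le_antisymm
    · refine iSup_le fun i => ?_
      cases i using Fin.cases with
      | zero => exact le_sup_left
      | succ i => exact le_sup_of_le_right (h.iSup_eq ▸ le_iSup Us i)
    · refine sup_le (le_iSup_of_le (f := Fin.cons U₀ Us) 0 le_rfl) ?_
      rw [← h.iSup_eq]
      exact iSup_le fun i => le_iSup_of_le (f := Fin.cons U₀ Us) i.succ le_rfl
  orthogonal i j hij := by
    have hle : ∀ i, Us i ≤ W := fun i => h.iSup_eq ▸ le_iSup Us i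
    cases i using Fin.cases with
    | zero =>
      cases j using Fin.cases with
      | zero => exact absurd rfl hij
      | succ j => exact horth.trans (LinearMap.BilinForm.orthogonal_le (hle j))
    | succ i =>
      cases j using Fin.cases with
      | zero => exact le_orthogonal_comm.1 (horth.trans (LinearMap.BilinForm.orthogonal_le (hle i)))
      | succ j => exact h.orthogonal i j (fun h => hij (congrArg Fin.succ h))
  reducing := Fin.cases hU₀ h.reducing

theorem IsOrthogonalDecomposition.isInternal {n : ℕ} {U : Fin n → Submodule k V}
    (h : S.IsOrthogonalDecomposition I ⊤ U) : DirectSum.IsInternal U := by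
  refine (DirectSum.isInternal_submodule_iff_iSupIndep_and_iSup_eq_top U).2 ⟨fun i => ?_, h.iSup_eq⟩
  refine (h.reducing i).disjoint.mono_right (iSup₂_le fun j hj => ?_)
  exact h.orthogonal j i hj

theorem exists_isOrthogonalDecomposition [FiniteDimensional k V] (hasa : S.IsAntiSelfAdj I)
    (P Q : Submodule k V → Prop) (hP : ∀ ⦃U W⦄, U ≤ W → P W → P U)
    (hblock : ∀ W, S.IsReducing I W → P W → W ≠ ⊥ → ∃ U ≤ W, S.IsReducing I U ∧ U ≠ ⊥ ∧ Q U)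
    (hW : S.IsReducing I W) (hPW : P W) :
    ∃ (n : ℕ) (U : Fin n → Submodule k V), S.IsOrthogonalDecomposition I W U ∧ ∀ i, Q (U i) := by
  induction W using WellFoundedLT.induction with
  | _ W ih =>
  by_cases hbot : W = ⊥
  · exact ⟨0, Fin.elim0, hbot ▸ isOrthogonalDecomposition_bot, fun i => i.elim0⟩
  obtain ⟨U, hUW, hU, hUbot, hQU⟩ := hblock W hW hPW hbot
  have hlt : S.orthogonal U ⊓ W < W := by
    refine inf_le_right.lt_of_ne fun heq => hUbot ?_
    have hUU : U ≤ S.orthogonal U := heq ▸ hUW |>.trans inf_le_left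
    exact le_bot_iff.1 (hU.disjoint le_rfl hUU)
  obtain ⟨n, Us, hUs, hQ⟩ := ih _ hlt (hU.orthogonal_inf hasa hW hUW) (hP inf_le_right hPW)
  refine ⟨n + 1, Fin.cons U Us, ?_, Fin.cases hQU hQ⟩
  rw [← sup_orthogonal_inf hU.disjoint hUW]
  exact hUs.cons hU (le_orthogonal_comm.1 inf_le_left)

end Decomposition

section Fitting

theorem ker_pow_le_orthogonal_range_pow (hodd : S.IsOddOp I) (hasa : S.IsAntiSelfAdj I) (n : ℕ) :
    LinearMap.ker (I ^ n) ≤ S.orthogonal (LinearMap.range (I ^ n)) := by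
  rintro x hx _ ⟨z, rfl⟩
  obtain ⟨a, b, ha, hb, rfl⟩ := S.exists_homog_add 0 z
  rw [map_add, map_add, LinearMap.add_apply, g_pow_apply_left hodd hasa ha,
    g_pow_apply_left hodd hasa hb, LinearMap.mem_ker.1 hx]
  simp

theorem mapsTo_ker_pow (n : ℕ) : ∀ x ∈ LinearMap.ker (I ^ n), I x ∈ LinearMap.ker (I ^ n) := by
  intro x hx
  rw [LinearMap.mem_ker, ← Module.End.mul_apply, ← pow_succ, pow_succ', Module.End.mul_apply,
    LinearMap.mem_ker.1 hx, map_zero]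

theorem mapsTo_range_pow (n : ℕ) :
    ∀ x ∈ LinearMap.range (I ^ n), I x ∈ LinearMap.range (I ^ n) := by
  rintro _ ⟨z, rfl⟩
  exact ⟨I z, by rw [← Module.End.mul_apply, ← pow_succ, pow_succ', Module.End.mul_apply]⟩

theorem isReducing_ker_pow (hodd : S.IsOddOp I) (hasa : S.IsAntiSelfAdj I) {n : ℕ}
    (h : IsCompl (LinearMap.ker (I ^ n)) (LinearMap.range (I ^ n))) :
    S.IsReducing I (LinearMap.ker (I ^ n)) where
  mapsTo := mapsTo_ker_pow n
  graded := isGraded_ker_pow hodd n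
  disjoint := disjoint_orthogonal_of_sup_eq disjoint_orthogonal_top h.symm.sup_eq_top
    (le_orthogonal_comm.1 (ker_pow_le_orthogonal_range_pow hodd hasa n))

theorem isReducing_range_pow (hodd : S.IsOddOp I) (hasa : S.IsAntiSelfAdj I) {n : ℕ}
    (h : IsCompl (LinearMap.ker (I ^ n)) (LinearMap.range (I ^ n))) :
    S.IsReducing I (LinearMap.range (I ^ n)) where
  mapsTo := mapsTo_range_pow n
  graded := isGraded_range_pow hodd n
  disjoint := disjoint_orthogonal_of_sup_eq disjoint_orthogonal_top h.sup_eq_top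
    (ker_pow_le_orthogonal_range_pow hodd hasa n)

theorem isType3_range_pow [FiniteDimensional k V] {n : ℕ} (hn : n ≠ 0)
    (h : IsCompl (LinearMap.ker (I ^ n)) (LinearMap.range (I ^ n))) :
    IsType3 I (LinearMap.range (I ^ n)) := by
  have hinj : ∀ x ∈ LinearMap.range (I ^ n), I x = 0 → x = 0 := by
    refine fun x hx hIx => Submodule.disjoint_def.1 h.disjoint x ?_ hx
    rw [LinearMap.mem_ker, ← Nat.sub_add_cancel (Nat.one_le_iff_ne_zero.2 hn), pow_succ,
      Module.End.mul_apply, hIx, map_zero]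
  have hsurj : Function.Surjective (I.restrict (mapsTo_range_pow n)) :=
    LinearMap.injective_iff_surjective.1 fun x y hxy => by
      have := hinj _ (sub_mem x.2 y.2) (by simpa [sub_eq_zero] using congrArg Subtype.val hxy)
      exact Subtype.ext (sub_eq_zero.1 this)
  refine ⟨mapsTo_range_pow n, hinj, fun y hy => ?_⟩
  obtain ⟨x, hx⟩ := hsurj ⟨y, hy⟩
  exact ⟨x, x.2, congrArg Subtype.val hx⟩

end Fitting

section Chains

variable (I) in
def chain (K : ℕ) (v : V) : Fin K → V := fun m => (I ^ (m : ℕ)) v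

theorem span_chain_le_comap {K : ℕ} {v : V} (hv : (I ^ K) v = 0) :
    Submodule.span k (Set.range (chain I K v)) ≤
      (Submodule.span k (Set.range (chain I K v))).comap I := by
  rw [Submodule.span_le]
  rintro _ ⟨m, rfl⟩
  rw [SetLike.mem_coe, Submodule.mem_comap, chain, ← Module.End.mul_apply, ← pow_succ']
  rcases Nat.lt_or_ge (m + 1) K with h | h
  · exact Submodule.subset_span ⟨⟨m + 1, h⟩, rfl⟩
  · rw [pow_apply_eq_zero_of_le hv h]
    exact zero_mem _

theorem span_chain_le {K : ℕ} {v : V} (hWI : ∀ x ∈ W, I x ∈ W) (hv : v ∈ W) :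
    Submodule.span k (Set.range (chain I K v)) ≤ W :=
  Submodule.span_le.2 <| by rintro _ ⟨m, rfl⟩; exact pow_apply_mem hWI m hv

theorem mem_span_chain {K m : ℕ} {v : V} (hm : m < K) :
    (I ^ m) v ∈ Submodule.span k (Set.range (chain I K v)) :=
  Submodule.subset_span ⟨⟨m, hm⟩, rfl⟩

theorem span_chain_ne_bot {K : ℕ} {v : V} (hK : K ≠ 0) (hv : v ≠ 0) :
    Submodule.span k (Set.range (chain I K v)) ≠ ⊥ := by
  intro h
  have := mem_span_chain (I := I) (v := v) (Nat.pos_of_ne_zero hK)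
  rw [h, pow_zero, Module.End.one_apply, Submodule.mem_bot] at this
  exact hv this

theorem g_apply_sum_of_dual {ι : Type*} [Fintype ι] [DecidableEq ι] {f h : ι → V} {c : ι → k}
    (hpair : ∀ i j, S.g (h i) (f j) = if i = j then c i else 0) (a : ι → k) (i : ι) :
    S.g (h i) (∑ j, a j • f j) = a i * c i := by
  simp [map_sum, hpair]

theorem linearIndependent_of_dual {ι : Type*} [Fintype ι] [DecidableEq ι] {f h : ι → V}
    {c : ι → k} (hc : ∀ i, c i ≠ 0)
    (hpair : ∀ i j, S.g (h i) (f j) = if i = j then c i else 0) : LinearIndependent k f := by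
  refine Fintype.linearIndependent_iff.2 fun a ha i => ?_
  have := g_apply_sum_of_dual hpair a i
  rw [ha, map_zero] at this
  exact (mul_eq_zero.1 this.symm).resolve_right (hc i)

theorem isReducing_span_of_dual {ι : Type*} [Fintype ι] [DecidableEq ι] {f h : ι → V}
    {c : ι → k} (hc : ∀ i, c i ≠ 0) (hpair : ∀ i j, S.g (h i) (f j) = if i = j then c i else 0)
    (hh : ∀ i, h i ∈ Submodule.span k (Set.range f)) (hhom : ∀ i, ∃ p, S.Homog p (f i))
    (hI : Submodule.span k (Set.range f) ≤ (Submodule.span k (Set.range f)).comap I) :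
    S.IsReducing I (Submodule.span k (Set.range f)) where
  mapsTo := hI
  graded := isGraded_span <| by rintro _ ⟨i, rfl⟩; exact hhom i
  disjoint := by
    refine Submodule.disjoint_def.2 fun x hx hxo => ?_
    obtain ⟨a, rfl⟩ := (Submodule.mem_span_range_iff_exists_fun k).1 hx
    have ha : ∀ i, a i = 0 := fun i => (mul_eq_zero.1 ((g_apply_sum_of_dual hpair a i).symm.trans
      (hxo _ (hh i)))).resolve_right (hc i)
    simp [ha]

end Chains

section Normalization

theorem g_add_smul_pow_apply_self (μ : k) (j : ℕ) :
    S.g (x + μ • z) ((I ^ j) (x + μ • z)) = S.g x ((I ^ j) x) + μ * S.g x ((I ^ j) z) +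
      μ * S.g z ((I ^ j) x) + μ ^ 2 * S.g z ((I ^ j) z) := by
  simp only [map_add, map_smul, LinearMap.add_apply, LinearMap.smul_apply, smul_eq_mul]
  ring

theorem g_pow_apply_pow_apply_eq_zero_of_le (hodd : S.IsOddOp I) (hasa : S.IsAntiSelfAdj I)
    {K m j : ℕ} (hz : S.Homog r z) (hy : (I ^ K) y = 0) (h : K ≤ m + j) :
    S.g ((I ^ m) z) ((I ^ j) y) = 0 := by
  rw [g_pow_apply_pow_apply hodd hasa hz, g_pow_apply_eq_zero_of_le hy h, mul_zero]

theorem exists_add_smul_g_pow_apply_self_eq_zero [NeZero (2 : k)] (hodd : S.IsOddOp I)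
    (hasa : S.IsAntiSelfAdj I) {K t : ℕ} (hx : S.Homog p x) (hy : S.Homog q y)
    (hyK : (I ^ K) y = 0) (ht : t + 1 < K) (hs : S.g x ((I ^ (K - 1)) y) ≠ 0) :
    ∃ μ : k, ∃ x', x' = x + μ • (I ^ (K - 1 - t)) y ∧ S.Homog p x' ∧ S.g x' ((I ^ t) x') = 0 ∧
      ∀ j, t < j → S.g x' ((I ^ j) x') = S.g x ((I ^ j) x) := by
  by_cases hct : S.g x ((I ^ t) x) = 0
  · exact ⟨0, x, by simp, hx, hct, fun _ _ => rfl⟩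
  -- `g x (I^t x) ≠ 0` forces `adjSign p t = 1` and `t` odd, so `x + μ • I^(K-1-t) y` is
  -- homogeneous and both cross terms equal `μ * g x (I^(K-1) y)`; the rest dies by nilpotency.
  set e := K - 1 - t with he
  have hpar := mod_two_eq_one_of_g_ne_zero hx (hx.pow_apply hodd t) hct
  have hpar' := mod_two_eq_one_of_g_ne_zero hx (hy.pow_apply hodd (K - 1)) hs
  have hexp : ∀ μ : k, ∀ j, S.g (x + μ • (I ^ e) y) ((I ^ j) (x + μ • (I ^ e) y)) =
      S.g x ((I ^ j) x) + μ * (1 + adjSign p j) * S.g x ((I ^ (j + e)) y) +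
        μ ^ 2 * S.g ((I ^ e) y) ((I ^ (j + e)) y) := fun μ j => by
    rw [g_add_smul_pow_apply_self, pow_apply_pow_apply, S.symm ((I ^ e) y),
      g_pow_apply_pow_apply hodd hasa hx]
    ring
  refine ⟨-S.g x ((I ^ t) x) / (2 * S.g x ((I ^ (K - 1)) y)), _, rfl,
    hx.add (((hy.pow_apply hodd e).of_mod_two_eq (by omega)).smul _), ?_, fun j hj => ?_⟩
  · rw [hexp, adjSign_eq_one_of_g_ne_zero hodd hasa hx hct, show t + e = K - 1 by omega,
      g_pow_apply_pow_apply_eq_zero_of_le hodd hasa hy hyK (by omega)]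
    field_simp
    ring
  · rw [hexp, g_pow_apply_eq_zero_of_le (j := j + e) hyK (by omega),
      g_pow_apply_pow_apply_eq_zero_of_le hodd hasa hy hyK (by omega)]
    ring

theorem g_add_smul_pow_apply_left (hodd : S.IsOddOp I) (hasa : S.IsAntiSelfAdj I) {K t e : ℕ}
    (hy : S.Homog q y) (hyy : ∀ m, K - 1 ≤ m → S.g y ((I ^ m) y) = 0) (hte : K - 1 ≤ e + t)
    (μ : k) {j : ℕ} (hj : t ≤ j) :
    S.g (x + μ • (I ^ e) y) ((I ^ j) y) = S.g x ((I ^ j) y) := by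
  rw [map_add, map_smul, LinearMap.add_apply, LinearMap.smul_apply,
    g_pow_apply_pow_apply hodd hasa hy, hyy _ (by omega), mul_zero, smul_zero, add_zero]

theorem g_pow_apply_add_smul_right {K t e : ℕ} (hyy : ∀ m, K - 1 ≤ m → S.g y ((I ^ m) y) = 0)
    (hte : K - 1 ≤ e + t) (μ : k) {j : ℕ} (hj : t ≤ j) :
    S.g y ((I ^ j) (x + μ • (I ^ e) y)) = S.g y ((I ^ j) x) := by
  rw [map_add, map_smul, pow_apply_pow_apply, map_add, map_smul, hyy _ (by omega), smul_zero,
    add_zero]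

theorem exists_add_smul_g_pow_apply_eq_zero (hodd : S.IsOddOp I) (hasa : S.IsAntiSelfAdj I)
    {K t : ℕ} {v u : V} (hv : S.Homog p v) (hu : S.Homog q u) (huK : (I ^ K) u = 0)
    (ht : t + 1 < K) (hs : S.g v ((I ^ (K - 1)) u) = 1)
    (huu : ∀ m, t ≤ m → S.g u ((I ^ m) u) = 0) :
    ∃ μ : k, ∃ u', u' = u + μ • (I ^ (K - 1 - t)) u ∧ S.Homog q u' ∧ S.g v ((I ^ t) u') = 0 ∧
      (∀ j, t < j → S.g v ((I ^ j) u') = S.g v ((I ^ j) u)) ∧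
      ∀ m, t ≤ m → S.g u' ((I ^ m) u') = 0 := by
  by_cases hct : S.g v ((I ^ t) u) = 0
  · exact ⟨0, u, by simp, hu, hct, fun _ _ => rfl, huu⟩
  set e := K - 1 - t with he
  have hpar := mod_two_eq_one_of_g_ne_zero hv (hu.pow_apply hodd t) hct
  have hpar' := mod_two_eq_one_of_g_ne_zero hv (hu.pow_apply hodd (K - 1)) (hs ▸ one_ne_zero)
  have hcross : ∀ μ : k, ∀ j, S.g v ((I ^ j) (u + μ • (I ^ e) u)) =
      S.g v ((I ^ j) u) + μ * S.g v ((I ^ (j + e)) u) := fun μ j => by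
    rw [map_add, map_smul, pow_apply_pow_apply, map_add, map_smul, smul_eq_mul]
  refine ⟨-S.g v ((I ^ t) u), _, rfl,
    hu.add (((hu.pow_apply hodd e).of_mod_two_eq (by omega)).smul _), ?_, fun j hj => ?_,
    fun m hm => ?_⟩
  · rw [hcross, show t + e = K - 1 by omega, hs]
    ring
  · rw [hcross, g_pow_apply_eq_zero_of_le (j := j + e) huK (by omega), mul_zero, add_zero]
  · rw [g_add_smul_pow_apply_self, pow_apply_pow_apply, g_pow_apply_left hodd hasa hu,
      g_pow_apply_left hodd hasa hu, pow_apply_pow_apply, pow_apply_pow_apply, huu m hm,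
      huu _ (by omega), huu _ (by omega), huu _ (by omega)]
    ring

end Normalization

section TypeOne

theorem mod_two_eq_of_adjSign_eq_one [NeZero (2 : k)] {n : ℕ} (hn : n ≠ 0)
    (h : (adjSign p (2 * n - 1) : k) = 1) : p % 2 = n % 2 := by
  obtain ⟨n, rfl⟩ : ∃ m, n = m + 1 := ⟨n - 1, by omega⟩
  have hne : (-1 : k) ≠ 1 := fun h' => two_ne_zero (α := k) (by linear_combination -h')
  rw [adjSign, show 2 * (n + 1) - 1 = 2 * n + 1 by omega, neg_one_pow_eq_one_iff_even hne,
    show (2 * n + 1) * (2 * n + 1 + 1) = 2 * ((2 * n + 1) * (n + 1)) by ring,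
    Nat.mul_div_cancel_left _ two_pos] at h
  simp [Nat.even_add, Nat.even_mul, parity_simps] at h
  rw [Nat.even_iff, Nat.odd_iff] at h
  omega

theorem exists_type1_normal [NeZero (2 : k)] (hodd : S.IsOddOp I) (hasa : S.IsAntiSelfAdj I)
    {K : ℕ} (hWI : ∀ x ∈ W, I x ∈ W) (hK : ∀ x ∈ W, (I ^ K) x = 0) (t : ℕ) {v : V} (hv : v ∈ W)
    (hhv : S.Homog p v) (htop : S.g v ((I ^ (K - 1)) v) ≠ 0)
    (hlow : ∀ j, t ≤ j → j < K - 1 → S.g v ((I ^ j) v) = 0) :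
    ∃ v' ∈ W, S.Homog p v' ∧ S.g v' ((I ^ (K - 1)) v') ≠ 0 ∧
      ∀ j < K - 1, S.g v' ((I ^ j) v') = 0 := by
  induction t generalizing v with
  | zero => exact ⟨v, hv, hhv, htop, fun j hj => hlow j (Nat.zero_le j) hj⟩
  | succ t ih =>
    by_cases ht : t + 1 < K
    · obtain ⟨μ, v', rfl, hhv', hv't, hv'j⟩ :=
        exists_add_smul_g_pow_apply_self_eq_zero hodd hasa hhv hhv (hK v hv) ht htop
      refine ih (W.add_mem hv (W.smul_mem μ (pow_apply_mem hWI _ hv))) hhv'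
        (by rwa [hv'j _ (by omega)]) fun j hj hjK => ?_
      rcases hj.eq_or_lt with rfl | hj
      · exact hv't
      · rw [hv'j j hj]
        exact hlow j hj hjK
    · exact ih hv hhv htop fun j hj hjK => hlow j (by omega) hjK

theorem exists_type1_block_of_normalized [NeZero (2 : k)] (hodd : S.IsOddOp I)
    (hasa : S.IsAntiSelfAdj I) {K : ℕ} (hWI : ∀ x ∈ W, I x ∈ W) (hK : ∀ x ∈ W, (I ^ K) x = 0)
    {w : V} (hw : w ∈ W) (hhw : S.Homog p w)
    (hnorm : ∀ j, S.g w ((I ^ j) w) = if j = K - 1 then 1 else 0) :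
    ∃ U ≤ W, S.IsReducing I U ∧ U ≠ ⊥ ∧ ∃ K', 1 ≤ K' ∧ S.IsType1 I K' U := by
  have hKw := hK w hw
  have htop : S.g w ((I ^ (K - 1)) w) ≠ 0 := by simp [hnorm]
  have hw0 : w ≠ 0 := by rintro rfl; simp at htop
  have hK0 : K ≠ 0 := by rintro rfl; simp at hKw; exact hw0 hKw
  have hgram : ∀ m m', S.g ((I ^ m) w) ((I ^ m') w) =
      if m + m' = K - 1 then adjSign p m else 0 := fun m m' => by
    rw [g_pow_apply_pow_apply hodd hasa hhw, hnorm]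
    split_ifs <;> simp
  have hpar := mod_two_eq_one_of_g_ne_zero hhw (hhw.pow_apply hodd (K - 1)) htop
  obtain ⟨K', rfl⟩ : ∃ K', K = 2 * K' := ⟨K / 2, by omega⟩
  have hpK := mod_two_eq_of_adjSign_eq_one (by omega)
    (adjSign_eq_one_of_g_ne_zero hodd hasa hhw htop)
  have hpair : ∀ i j : Fin (2 * K'), S.g ((I ^ (2 * K' - 1 - i)) w) (chain I (2 * K') w j) =
      if i = j then adjSign p (2 * K' - 1 - i) else 0 := fun i j => by
    rw [chain, hgram]
    by_cases hij : i = j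
    · rw [if_pos (by subst hij; omega), if_pos hij]
    · rw [if_neg fun h => hij (Fin.ext (by omega)), if_neg hij]
  refine ⟨_, span_chain_le hWI hw, isReducing_span_of_dual (fun i => adjSign_ne_zero _ _) hpair
    (fun i => mem_span_chain (by omega)) (fun i => ⟨_, hhw.pow_apply hodd i⟩)
    (span_chain_le_comap hKw), span_chain_ne_bot hK0 hw0, K', by omega, w,
    hhw.of_mod_two_eq (by omega), hKw, linearIndependent_of_dual (fun i => adjSign_ne_zero _ _)
    hpair, rfl, fun m _ m' _ => ?_⟩
  rw [hgram, adjSign_congr (q := K' % 2) (by omega)]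
  rfl

theorem exists_type1_block [NeZero (2 : k)] [IsAlgClosed k] (hodd : S.IsOddOp I)
    (hasa : S.IsAntiSelfAdj I) {K : ℕ} (hWI : ∀ x ∈ W, I x ∈ W) (hK : ∀ x ∈ W, (I ^ K) x = 0)
    {w : V} (hw : w ∈ W) (hhw : S.Homog p w) (htop : S.g w ((I ^ (K - 1)) w) ≠ 0) :
    ∃ U ≤ W, S.IsReducing I U ∧ U ≠ ⊥ ∧ ∃ K', 1 ≤ K' ∧ S.IsType1 I K' U := by
  obtain ⟨v, hv, hhv, hvtop, hvlow⟩ :=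
    exists_type1_normal hodd hasa hWI hK (K - 1) hw hhw htop fun j hj hj' => absurd hj' (by omega)
  obtain ⟨c, hc⟩ := IsAlgClosed.exists_pow_nat_eq (S.g v ((I ^ (K - 1)) v))⁻¹ two_pos
  refine exists_type1_block_of_normalized hodd hasa hWI hK (W.smul_mem c hv) (hhv.smul c)
    fun j => ?_
  simp only [map_smul, LinearMap.smul_apply, smul_eq_mul, ← mul_assoc, ← sq, hc]
  split_ifs with hj
  · rw [hj, inv_mul_cancel₀ hvtop]
  · rcases Nat.lt_or_gt_of_ne hj with hj | hj
    · rw [hvlow j hj, mul_zero]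
    · rw [g_pow_apply_eq_zero_of_le (j := j) (hK v hv) (by omega), mul_zero]

end TypeOne

section TypeTwo

-- The Gram relations of a type `2_K` pair, imposed only in `I`-degrees `≥ t`.
structure IsNormalPair (S : OddSP k V) (I : V →ₗ[k] V) (K t : ℕ) (v u : V) : Prop where
  left : ∀ j, t ≤ j → S.g v ((I ^ j) v) = 0
  right : ∀ j, t ≤ j → S.g u ((I ^ j) u) = 0
  cross : ∀ j, t ≤ j → S.g v ((I ^ j) u) = if j = K - 1 then 1 else 0

theorem IsNormalPair.exists_pred [NeZero (2 : k)] (hodd : S.IsOddOp I)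
    (hasa : S.IsAntiSelfAdj I) {K t : ℕ} {v u : V} (hWI : ∀ x ∈ W, I x ∈ W)
    (hK : ∀ x ∈ W, (I ^ K) x = 0) (hv : v ∈ W) (hu : u ∈ W) (hhv : S.Homog p v)
    (hhu : S.Homog q u) (ht : t + 1 < K) (h : S.IsNormalPair I K (t + 1) v u) :
    ∃ v' ∈ W, ∃ u' ∈ W, S.Homog p v' ∧ S.Homog q u' ∧ S.IsNormalPair I K t v' u' := by
  have hmem : ∀ {x y : V}, x ∈ W → y ∈ W → ∀ (μ : k) (e : ℕ), x + μ • (I ^ e) y ∈ W :=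
    fun hx hy μ e => W.add_mem hx (W.smul_mem μ (pow_apply_mem hWI e hy))
  have htop : S.g v ((I ^ (K - 1)) u) = 1 := by simpa using h.cross (K - 1) (by omega)
  obtain ⟨μ, v₁, hv₁, hhv₁, hv₁t, hv₁j⟩ :=
    exists_add_smul_g_pow_apply_self_eq_zero hodd hasa hhv hhu (hK u hu) ht (htop ▸ one_ne_zero)
  have hv₁W : v₁ ∈ W := hv₁ ▸ hmem hv hu μ _
  have hv₁u : ∀ j, t ≤ j → S.g v₁ ((I ^ j) u) = S.g v ((I ^ j) u) := fun j hj => hv₁ ▸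
    g_add_smul_pow_apply_left (K := K) hodd hasa hhu (fun m hm => h.right m (by omega))
      (by omega) μ hj
  have hv₁v₁ : ∀ j, t ≤ j → S.g v₁ ((I ^ j) v₁) = 0 := fun j hj =>
    hj.eq_or_lt.elim (fun h' => h' ▸ hv₁t) fun hj => (hv₁j j hj).trans (h.left j hj)
  have htop₁ : S.g v₁ ((I ^ (K - 1)) u) = 1 := (hv₁u _ (by omega)).trans htop
  have hs : S.g u ((I ^ (K - 1)) v₁) ≠ 0 := by
    rw [g_pow_apply_swap hodd hasa hhv₁, htop₁, mul_one]
    exact adjSign_ne_zero _ _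
  obtain ⟨ν, u₂, hu₂, hhu₂, hu₂t, hu₂j⟩ :=
    exists_add_smul_g_pow_apply_self_eq_zero hodd hasa hhu hhv₁ (hK _ hv₁W) ht hs
  have hu₂W : u₂ ∈ W := hu₂ ▸ hmem hu hv₁W ν _
  have hv₁u₂ : ∀ j, t ≤ j → S.g v₁ ((I ^ j) u₂) = S.g v₁ ((I ^ j) u) := fun j hj => hu₂ ▸
    g_pow_apply_add_smul_right (K := K) (fun m hm => hv₁v₁ m (by omega)) (by omega) ν hj
  have hu₂u₂ : ∀ j, t ≤ j → S.g u₂ ((I ^ j) u₂) = 0 := fun j hj =>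
    hj.eq_or_lt.elim (fun h' => h' ▸ hu₂t) fun hj => (hu₂j j hj).trans (h.right j hj)
  obtain ⟨κ, u₃, hu₃, hhu₃, hu₃t, hu₃j, hu₃u₃⟩ := exists_add_smul_g_pow_apply_eq_zero hodd hasa
    hhv₁ hhu₂ (hK _ hu₂W) ht ((hv₁u₂ _ (by omega)).trans htop₁) hu₂u₂
  refine ⟨v₁, hv₁W, u₃, hu₃ ▸ hmem hu₂W hu₂W κ _, hhv₁, hhu₃, hv₁v₁, hu₃u₃, fun j hj => ?_⟩
  rcases hj.eq_or_lt with rfl | hj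
  · rw [hu₃t, if_neg (by omega)]
  · rw [hu₃j j hj, hv₁u₂ j hj.le, hv₁u j hj.le, h.cross j hj]

theorem IsNormalPair.exists_zero [NeZero (2 : k)] (hodd : S.IsOddOp I)
    (hasa : S.IsAntiSelfAdj I) {K : ℕ} (hWI : ∀ x ∈ W, I x ∈ W) (hK : ∀ x ∈ W, (I ^ K) x = 0)
    (t : ℕ) (ht : t < K) {v u : V} (hv : v ∈ W) (hu : u ∈ W) (hhv : S.Homog p v)
    (hhu : S.Homog q u) (h : S.IsNormalPair I K t v u) :
    ∃ v' ∈ W, ∃ u' ∈ W, S.Homog p v' ∧ S.Homog q u' ∧ S.IsNormalPair I K 0 v' u' := by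
  induction t generalizing v u with
  | zero => exact ⟨v, hv, u, hu, hhv, hhu, h⟩
  | succ t ih =>
    obtain ⟨v', hv', u', hu', hhv', hhu', h'⟩ := h.exists_pred hodd hasa hWI hK hv hu hhv hhu ht
    exact ih (by omega) hv' hu' hhv' hhu' h'

theorem IsNormalPair.gram_left (hodd : S.IsOddOp I) (hasa : S.IsAntiSelfAdj I) {K : ℕ}
    {v u : V} (hhv : S.Homog p v) (h : S.IsNormalPair I K 0 v u) (m m' : ℕ) :
    S.g ((I ^ m) v) ((I ^ m') v) = 0 := by
  rw [g_pow_apply_pow_apply hodd hasa hhv, h.left _ (Nat.zero_le _), mul_zero]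

theorem IsNormalPair.gram_right (hodd : S.IsOddOp I) (hasa : S.IsAntiSelfAdj I) {K : ℕ}
    {v u : V} (hhu : S.Homog q u) (h : S.IsNormalPair I K 0 v u) (m m' : ℕ) :
    S.g ((I ^ m) u) ((I ^ m') u) = 0 := by
  rw [g_pow_apply_pow_apply hodd hasa hhu, h.right _ (Nat.zero_le _), mul_zero]

theorem IsNormalPair.gram_cross (hodd : S.IsOddOp I) (hasa : S.IsAntiSelfAdj I) {K : ℕ}
    {v u : V} (hhv : S.Homog p v) (h : S.IsNormalPair I K 0 v u) (m m' : ℕ) :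
    S.g ((I ^ m) v) ((I ^ m') u) = if m + m' = K - 1 then adjSign p m else 0 := by
  rw [g_pow_apply_pow_apply hodd hasa hhv, h.cross _ (Nat.zero_le _)]
  split_ifs <;> simp

theorem IsNormalPair.g_dual_chain (hodd : S.IsOddOp I) (hasa : S.IsAntiSelfAdj I) {K : ℕ}
    {v u : V} (hhv : S.Homog p v) (hhu : S.Homog q u) (h : S.IsNormalPair I K 0 v u)
    (i j : Fin K ⊕ Fin K) :
    S.g (Sum.elim (fun m : Fin K => (I ^ (K - 1 - m)) u) (fun m : Fin K => (I ^ (K - 1 - m)) v) i)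
      (Sum.elim (chain I K v) (chain I K u) j) =
    if i = j then Sum.elim (fun m : Fin K => adjSign p m) (fun m : Fin K => adjSign p (K - 1 - m)) i
    else 0 := by
  rcases i with i | i <;> rcases j with j | j <;> simp only [Sum.elim_inl, Sum.elim_inr, chain,
    Sum.inl.injEq, Sum.inr.injEq, reduceCtorEq, if_false, h.gram_left hodd hasa hhv,
    h.gram_right hodd hasa hhu, S.symm ((I ^ (K - 1 - i)) u), h.gram_cross hodd hasa hhv]
  all_goals by_cases hij : i = j
  all_goals first
    | subst hij; rw [if_pos (by omega), if_pos rfl]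
    | rw [if_neg fun h => hij (Fin.ext (by omega)), if_neg hij]

theorem IsNormalPair.exists_type2_block (hodd : S.IsOddOp I) (hasa : S.IsAntiSelfAdj I) {K : ℕ}
    (hWI : ∀ x ∈ W, I x ∈ W) (hK : ∀ x ∈ W, (I ^ K) x = 0) {v u : V} (hv : v ∈ W) (hu : u ∈ W)
    (hhv : S.Homog p v) (hhu : S.Homog q u) (h : S.IsNormalPair I K 0 v u) :
    ∃ U ≤ W, S.IsReducing I U ∧ U ≠ ⊥ ∧ ∃ K', 1 ≤ K' ∧ S.IsType2 I K' U := by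
  have hKv := hK v hv
  have hKu := hK u hu
  have htop : S.g v ((I ^ (K - 1)) u) = 1 := by simpa using h.cross (K - 1) (Nat.zero_le _)
  have hv0 : v ≠ 0 := by rintro rfl; simp at htop
  have hK0 : K ≠ 0 := by rintro rfl; simp at hKv; exact hv0 hKv
  have hpar := mod_two_eq_one_of_g_ne_zero hhv (hhu.pow_apply hodd (K - 1)) (htop ▸ one_ne_zero)
  have hspan : Submodule.span k (Set.range (Sum.elim (chain I K v) (chain I K u))) =
      Submodule.span k (Set.range (chain I K v)) ⊔ Submodule.span k (Set.range (chain I K u)) := by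
    rw [Set.Sum.elim_range, Submodule.span_union]
  have hc : ∀ i, Sum.elim (fun m : Fin K => (adjSign p m : k))
      (fun m : Fin K => adjSign p (K - 1 - m)) i ≠ 0 := by
    rintro (i | i) <;> exact adjSign_ne_zero _ _
  have hpair := h.g_dual_chain hodd hasa hhv hhu
  refine ⟨_, hspan ▸ sup_le (span_chain_le hWI hv) (span_chain_le hWI hu),
    isReducing_span_of_dual hc hpair ?_ ?_ ?_,
    fun hbot => span_chain_ne_bot hK0 hv0 (le_bot_iff.1 (hbot ▸ hspan ▸ le_sup_left)),
    K, Nat.one_le_iff_ne_zero.2 hK0, v, u, p, q, hhv, hhu, by omega, hKv, hKu,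
    linearIndependent_of_dual hc hpair, rfl, fun m _ m' _ => h.gram_left hodd hasa hhv m m',
    fun m _ m' _ => h.gram_right hodd hasa hhu m m',
    fun m _ m' _ => h.gram_cross hodd hasa hhv m m'⟩
  · rintro (i | i)
    · exact Submodule.subset_span ⟨Sum.inr ⟨K - 1 - i, by omega⟩, rfl⟩
    · exact Submodule.subset_span ⟨Sum.inl ⟨K - 1 - i, by omega⟩, rfl⟩
  · rintro (i | i)
    · exact ⟨_, hhv.pow_apply hodd i⟩
    · exact ⟨_, hhu.pow_apply hodd i⟩
  · rw [hspan]
    exact sup_le ((span_chain_le_comap hKv).trans (Submodule.comap_mono le_sup_left))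
      ((span_chain_le_comap hKu).trans (Submodule.comap_mono le_sup_right))

theorem exists_type2_block [NeZero (2 : k)] (hodd : S.IsOddOp I) (hasa : S.IsAntiSelfAdj I)
    {K : ℕ} (hWI : ∀ x ∈ W, I x ∈ W) (hK : ∀ x ∈ W, (I ^ K) x = 0)
    (hself : ∀ r w, w ∈ W → S.Homog r w → S.g w ((I ^ (K - 1)) w) = 0) {v u : V}
    (hv : v ∈ W) (hu : u ∈ W) (hhv : S.Homog p v) (hhu : S.Homog q u)
    (hvu : S.g v ((I ^ (K - 1)) u) ≠ 0) :
    ∃ U ≤ W, S.IsReducing I U ∧ U ≠ ⊥ ∧ ∃ K', 1 ≤ K' ∧ S.IsType2 I K' U := by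
  have hK0 : K ≠ 0 := by
    rintro rfl
    have hu0 : u = 0 := by simpa using hK u hu
    simp [hu0] at hvu
  set u₀ := (S.g v ((I ^ (K - 1)) u))⁻¹ • u
  have hu₀ : u₀ ∈ W := W.smul_mem _ hu
  have hbase : S.IsNormalPair I K (K - 1) v u₀ := by
    refine ⟨fun j hj => ?_, fun j hj => ?_, fun j hj => ?_⟩ <;> rcases hj.eq_or_lt with rfl | hj
    · exact hself p v hv hhv
    · exact g_pow_apply_eq_zero_of_le (hK v hv) (by omega)
    · exact hself q u₀ hu₀ (hhu.smul _)
    · exact g_pow_apply_eq_zero_of_le (hK u₀ hu₀) (by omega)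
    · simp [u₀, inv_mul_cancel₀ hvu]
    · rw [g_pow_apply_eq_zero_of_le (hK u₀ hu₀) (by omega), if_neg (by omega)]
  obtain ⟨v', hv', u', hu', hhv', hhu', h⟩ :=
    hbase.exists_zero hodd hasa hWI hK _ (by omega) hv hu₀ hhv (hhu.smul _)
  exact h.exists_type2_block hodd hasa hWI hK hv' hu' hhv' hhu'

end TypeTwo

theorem exists_nilpotent_block [NeZero (2 : k)] [IsAlgClosed k] (hodd : S.IsOddOp I)
    (hasa : S.IsAntiSelfAdj I) {N : ℕ} (hW : S.IsReducing I W) (hN : ∀ x ∈ W, (I ^ N) x = 0)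
    (hbot : W ≠ ⊥) :
    ∃ U ≤ W, S.IsReducing I U ∧ U ≠ ⊥ ∧
      ((∃ K, 1 ≤ K ∧ S.IsType1 I K U) ∨ (∃ K, 1 ≤ K ∧ S.IsType2 I K U)) := by
  classical
  have hex : ∃ K, ∀ x ∈ W, (I ^ K) x = 0 := ⟨N, hN⟩
  have hK : ∀ x ∈ W, (I ^ Nat.find hex) x = 0 := Nat.find_spec hex
  have hK0 : Nat.find hex ≠ 0 := fun h =>
    hbot <| (Submodule.eq_bot_iff W).2 fun x hx => by simpa [h] using hK x hx
  obtain ⟨x, hxW, hx⟩ : ∃ x ∈ W, (I ^ (Nat.find hex - 1)) x ≠ 0 := by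
    by_contra! h
    exact Nat.find_min hex (by omega : Nat.find hex - 1 < Nat.find hex) h
  by_cases h1 : ∃ p w, w ∈ W ∧ S.Homog p w ∧ S.g w ((I ^ (Nat.find hex - 1)) w) ≠ 0
  · obtain ⟨p, w, hw, hhw, htop⟩ := h1
    obtain ⟨U, hUW, hU, hUbot, hT⟩ := exists_type1_block hodd hasa hW.mapsTo hK hw hhw htop
    exact ⟨U, hUW, hU, hUbot, Or.inl hT⟩
  push Not at h1
  obtain ⟨p, v, hv, hhv, hvK⟩ := hW.graded.exists_homog_apply_ne_zero _ hxW hx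
  obtain ⟨y, hy, hyv⟩ : ∃ y ∈ W, S.g v ((I ^ (Nat.find hex - 1)) y) ≠ 0 := by
    by_contra! h
    refine hvK (Submodule.disjoint_def.1 hW.disjoint _ (pow_apply_mem hW.mapsTo _ hv) ?_)
    exact fun y hy => by rw [g_pow_apply_swap hodd hasa hhv, h y hy, mul_zero]
  obtain ⟨q, u, hu, hhu, huv⟩ :=
    hW.graded.exists_homog_apply_ne_zero ((S.g v).comp (I ^ (Nat.find hex - 1))) hy hyv
  obtain ⟨U, hUW, hU, hUbot, hT⟩ := exists_type2_block hodd hasa hW.mapsTo hK h1 hv hu hhv hhu huv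
  exact ⟨U, hUW, hU, hUbot, Or.inr hT⟩

end OddSP

/-- Over an algebraically closed field of characteristic zero, any odd
anti-self-adjoint operator `I` on a finite-dimensional ℤ/2ℤ-graded vector space with odd
symmetric non-degenerate scalar product decomposes the space into a direct sum of pairwise
`g`-orthogonal, `I`-invariant graded subspaces, each of type `1_K` (`K ≥ 1`), of type
`2_K` (`K ≥ 1`), or of type `3`. -/
theorem oddASA_block_decomposition
    {k V : Type*} [Field k] [IsAlgClosed k] [CharZero k]
    [AddCommGroup V] [Module k V] [FiniteDimensional k V]
    (S : OddSP k V) (I : V →ₗ[k] V)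
    (hodd : S.IsOddOp I) (hasa : S.IsAntiSelfAdj I) :
    ∃ (n : ℕ) (U : Fin n → Submodule k V),
      DirectSum.IsInternal U ∧
      (∀ i j, i ≠ j → ∀ x ∈ U i, ∀ y ∈ U j, S.g x y = 0) ∧
      (∀ i, ∀ x ∈ U i, I x ∈ U i) ∧
      (∀ i, S.IsGraded (U i)) ∧
      (∀ i, (∃ K, 1 ≤ K ∧ S.IsType1 I K (U i)) ∨
            (∃ K, 1 ≤ K ∧ S.IsType2 I K (U i)) ∨
            OddSP.IsType3 I (U i)) := by
  obtain ⟨n, hcompl, hn⟩ :=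
    (I.eventually_isCompl_ker_pow_range_pow.and (Filter.eventually_ge_atTop 1)).exists
  obtain ⟨m, U, hU, htype⟩ := OddSP.exists_isOrthogonalDecomposition hasa
    (fun W => ∀ x ∈ W, (I ^ n) x = 0)
    (fun U => (∃ K, 1 ≤ K ∧ S.IsType1 I K U) ∨ (∃ K, 1 ≤ K ∧ S.IsType2 I K U))
    (fun _ _ hUW hW x hx => hW x (hUW hx))
    (fun _ hW hN hbot => OddSP.exists_nilpotent_block hodd hasa hW hN hbot)
    (OddSP.isReducing_ker_pow hodd hasa hcompl) fun x hx => hx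
  have hdec := hU.cons (OddSP.isReducing_range_pow hodd hasa hcompl)
    (OddSP.le_orthogonal_comm.1 (OddSP.ker_pow_le_orthogonal_range_pow hodd hasa n))
  rw [hcompl.symm.sup_eq_top] at hdec
  refine ⟨m + 1, _, hdec.isInternal,
    fun i j hij x hx y hy => (S.symm x y).trans (hdec.orthogonal i j hij hx y hy),
    fun i => (hdec.reducing i).mapsTo, fun i => (hdec.reducing i).graded, fun i => ?_⟩
  cases i using Fin.cases with
  | zero => exact Or.inr (Or.inr (OddSP.isType3_range_pow (by omega) hcompl))
  | succ i => exact (htype i).elim Or.inl (Or.inr ∘ Or.inl)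
end

section
/- Let V be a vector space over a field, N an endomorphism of V, k ≥ 1, and v ∈ V a vector such that v, Nv, N²v, …, N^{2k−2}v form a basis of V and N^{2k−1}v = 0 (a single Jordan chain of odd length 2k−1). Then there exists no endomorphism T of V satisfying N∘T + T∘N = id_V. -/
private lemma telescope_alt {k V : Type*} [Field k] [AddCommGroup V] [Module k V]
    (A : ℕ → V) (n : ℕ) :
    ∑ i ∈ Finset.range n, (-1 : k) ^ i • (A i + A (i + 1))
      = A 0 + (-1 : k) ^ (n + 1) • A n := by
  induction n with
  | zero => simp
  | succ n ih =>
      rw [Finset.sum_range_succ, ih]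
      have h1 : (-1 : k) ^ (n + 1) = -(-1 : k) ^ n := by rw [pow_succ]; ring
      have h2 : (-1 : k) ^ (n + 2) = (-1 : k) ^ n := by rw [pow_succ, pow_succ]; ring
      rw [h1, h2, smul_add, neg_smul]
      abel

private lemma alt_sum_odd {k : Type*} [Field k] (n : ℕ) :
    ∑ i ∈ Finset.range (2 * n + 1), (-1 : k) ^ i = 1 := by
  induction n with
  | zero => simp
  | succ n ih =>
      have h : 2 * (n + 1) + 1 = (2 * n + 1) + 1 + 1 := by ring
      rw [h, Finset.sum_range_succ, Finset.sum_range_succ, ih, pow_succ, pow_succ]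
      ring

/-- If `v, Nv, …, N^{2k−2}v` is a basis of `V` and `N^{2k−1} v = 0`
(a single Jordan chain of odd length `2k−1`), then no endomorphism `T` satisfies
`N∘T + T∘N = id`. -/
theorem no_homotopy_inverse_on_odd_jordan_chain
    {k V : Type*} [Field k] [AddCommGroup V] [Module k V]
    (N : V →ₗ[k] V) (m : ℕ) (hm : 1 ≤ m) (v : V)
    (hli : LinearIndependent k (fun i : Fin (2 * m - 1) => (N ^ (i : ℕ)) v))
    (hspan : Submodule.span k
      (Set.range fun i : Fin (2 * m - 1) => (N ^ (i : ℕ)) v) = ⊤)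
    (hnil : (N ^ (2 * m - 1)) v = 0) :
    ¬ ∃ T : V →ₗ[k] V, N ∘ₗ T + T ∘ₗ N = LinearMap.id := by
  rintro ⟨T, hT⟩
  set d := 2 * m - 1 with hd
  have hd1 : 1 ≤ d := by omega
  have hTpt : ∀ w : V, N (T w) + T (N w) = w := by
    intro w
    have := congrArg (fun f : V →ₗ[k] V => f w) hT
    simpa using this
  -- N ^ d = 0 as an operator
  have hNd : ∀ w : V, (N ^ d) w = 0 := by
    have h : (N ^ d) = (0 : V →ₗ[k] V) := by
      apply LinearMap.ext_on hspan
      rintro x ⟨i, rfl⟩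
      have hcomm : (N ^ d) ((N ^ (i : ℕ)) v) = (N ^ (i : ℕ)) ((N ^ d) v) := by
        rw [← Module.End.mul_apply, ← Module.End.mul_apply, ← pow_add, ← pow_add,
          add_comm]
      simp only [LinearMap.zero_apply, hcomm, hnil, map_zero]
    intro w; rw [h]; rfl
  set A : ℕ → V := fun i => (N ^ i) (T ((N ^ (d - i)) v)) with hA
  have step : ∀ i < d, A i + A (i + 1) = (N ^ (d - 1)) v := by
    intro i hi
    set w : V := (N ^ (d - 1 - i)) v with hw
    have e1 : A (i + 1) = (N ^ i) (N (T w)) := by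
      show (N ^ (i + 1)) (T ((N ^ (d - (i + 1))) v)) = _
      rw [show d - (i + 1) = d - 1 - i from by omega, pow_succ,
        Module.End.mul_apply]
    have e2 : A i = (N ^ i) (T (N w)) := by
      have h : (N ^ (d - i)) v = N w := by
        rw [show d - i = (d - 1 - i) + 1 from by omega, pow_succ', Module.End.mul_apply]
      show (N ^ i) (T ((N ^ (d - i)) v)) = _
      rw [h]
    have e3 : (N ^ i) w = (N ^ (d - 1)) v := by
      rw [hw, ← Module.End.mul_apply, ← pow_add, show i + (d - 1 - i) = d - 1 from by omega]
    rw [e1, e2, ← map_add, add_comm (T (N w)), hTpt w, e3]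
  have hsum : ∑ i ∈ Finset.range d, (-1 : k) ^ i • (A i + A (i + 1))
      = (N ^ (d - 1)) v := by
    rw [Finset.sum_congr rfl fun i hi => by
      rw [step i (Finset.mem_range.mp hi)], ← Finset.sum_smul,
      show d = 2 * (m - 1) + 1 from by omega, alt_sum_odd, one_smul]
  rw [telescope_alt] at hsum
  have hA0 : A 0 = 0 := by
    show (N ^ 0) (T ((N ^ (d - 0)) v)) = 0
    simp only [Nat.sub_zero, hnil, ← hd, map_zero, pow_zero, Module.End.one_apply]
  have hAd : A d = 0 := by
    show (N ^ d) (T ((N ^ (d - d)) v)) = 0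
    exact hNd _
  have hpow : (-1 : k) ^ (d + 1) = 1 := by
    rw [show d + 1 = 2 * m from by omega, pow_mul]
    norm_num
  rw [hA0, hAd, hpow, smul_zero, add_zero] at hsum
  have hne : (fun i : Fin d => (N ^ (i : ℕ)) v) ⟨d - 1, by omega⟩ ≠ 0 :=
    hli.ne_zero ⟨d - 1, by omega⟩
  exact hne hsum.symm
end

section
/- Let k be an algebraically closed field of characteristic zero, V a finite-dimensional ℤ/2ℤ-graded vector space over k with an odd symmetric non-degenerate scalar product g, and I an odd anti-self-adjoint operator on V. If the symmetric bilinear form (x, y) ↦ g(Ix, y) on V₁ is non-degenerate (equivalently, the even quadratic function x ↦ g(Ix, x) on the even part of the parity-reversed space ΠV is a non-degenerate quadratic form), then there exists an odd self-adjoint operator Ĩ on V with I∘Ĩ + Ĩ∘I = id_V. -/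
variable {k V : Type*} [Field k] [AddCommGroup V] [Module k V]

theorem LinearMap.finrank_le_finrank_of_separatingLeft {K M N : Type*} [Field K]
    [AddCommGroup M] [Module K M] [AddCommGroup N] [Module K N] [FiniteDimensional K N]
    {B : M →ₗ[K] N →ₗ[K] K} (hB : B.SeparatingLeft) :
    Module.finrank K M ≤ Module.finrank K N :=
  (LinearMap.finrank_le_finrank_of_injective
    (LinearMap.ker_eq_bot.mp (LinearMap.separatingLeft_iff_ker_eq_bot.mp hB))).trans_eq
    Subspace.dual_finrank_eq

namespace OddSP

variable (S : OddSP k V)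

theorem exists_add_eq (y : V) : ∃ a ∈ S.V0, ∃ b ∈ S.V1, a + b = y :=
  Submodule.mem_sup.mp (S.compl.sup_eq_top ▸ Submodule.mem_top)

theorem eq_zero_of_mem_V0 {x : V} (hx : x ∈ S.V0) (h : ∀ y ∈ S.V1, S.g x y = 0) : x = 0 :=
  S.nondeg x fun y => by
    obtain ⟨a, ha, b, hb, rfl⟩ := S.exists_add_eq y
    rw [map_add, S.zero00 x hx a ha, h b hb, add_zero]

theorem eq_zero_of_mem_V1 {x : V} (hx : x ∈ S.V1) (h : ∀ y ∈ S.V0, S.g x y = 0) : x = 0 :=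
  S.nondeg x fun y => by
    obtain ⟨a, ha, b, hb, rfl⟩ := S.exists_add_eq y
    rw [map_add, S.zero11 x hx b hb, h a ha, zero_add]

theorem finrank_V1_eq_finrank_V0 [FiniteDimensional k V] :
    Module.finrank k S.V1 = Module.finrank k S.V0 :=
  le_antisymm
    (LinearMap.finrank_le_finrank_of_separatingLeft (B := S.g.domRestrict₁₂ S.V1 S.V0)
      fun x hx => Subtype.ext <| S.eq_zero_of_mem_V1 x.2 fun y hy => hx ⟨y, hy⟩)
    (LinearMap.finrank_le_finrank_of_separatingLeft (B := S.g.domRestrict₁₂ S.V0 S.V1)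
      fun x hx => Subtype.ext <| S.eq_zero_of_mem_V0 x.2 fun y hy => hx ⟨y, hy⟩)

theorem homog_iff_mem_V0 {p : ℕ} (hp : Even p) {x : V} : S.Homog p x ↔ x ∈ S.V0 := by
  simp [Homog, Nat.even_iff.mp hp]

theorem homog_iff_mem_V1 {p : ℕ} (hp : Odd p) {x : V} : S.Homog p x ↔ x ∈ S.V1 := by
  simp [Homog, Nat.odd_iff.mp hp]

variable {S}

theorem IsAntiSelfAdj.g_apply_eq {I : V →ₗ[k] V} (hI : S.IsAntiSelfAdj I) {u : V}
    (hu : u ∈ S.V1) (w : V) : S.g (I u) w = S.g u (I w) := by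
  linear_combination hI 1 u ((S.homog_iff_mem_V1 odd_one).mpr hu) w

noncomputable def restrictV1Equiv [FiniteDimensional k V] {I : V →ₗ[k] V} (hI : S.IsOddOp I)
    (hinj : ∀ x ∈ S.V1, I x = 0 → x = 0) : S.V1 ≃ₗ[k] S.V0 :=
  ((I.domRestrict S.V1).codRestrict S.V0 fun x => hI.2 x x.2).linearEquivOfInjective
    ((injective_iff_map_eq_zero _).mpr fun x hx => Subtype.ext (hinj x x.2 congr(($hx : V))))
    S.finrank_V1_eq_finrank_V0

theorem coe_restrictV1Equiv_apply [FiniteDimensional k V] {I : V →ₗ[k] V} (hI : S.IsOddOp I)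
    (hinj : ∀ x ∈ S.V1, I x = 0 → x = 0) (x : S.V1) :
    (restrictV1Equiv hI hinj x : V) = I x :=
  rfl

noncomputable def oddInverse (e : S.V1 ≃ₗ[k] S.V0) : V →ₗ[k] V :=
  S.V1.subtype ∘ₗ e.symm.toLinearMap ∘ₗ S.V0.projectionOnto S.V1 S.compl

section oddInverse

variable (e : S.V1 ≃ₗ[k] S.V0)

theorem oddInverse_mem_V1 (x : V) : oddInverse e x ∈ S.V1 :=
  (e.symm _).2

theorem oddInverse_apply_of_mem_V0 {x : V} (hx : x ∈ S.V0) :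
    oddInverse e x = e.symm ⟨x, hx⟩ := by
  simp [oddInverse, Submodule.projectionOnto_apply_of_mem_left S.compl hx]

theorem oddInverse_apply_of_mem_V1 {x : V} (hx : x ∈ S.V1) : oddInverse e x = 0 := by
  simp [oddInverse, Submodule.projectionOnto_apply_of_mem_right S.compl hx]

theorem isOddOp_oddInverse : S.IsOddOp (oddInverse e) :=
  ⟨fun x _ => oddInverse_mem_V1 e x,
    fun _ hx => oddInverse_apply_of_mem_V1 e hx ▸ S.V0.zero_mem⟩

variable {I : V →ₗ[k] V}

theorem apply_oddInverse (he : ∀ x : S.V1, (e x : V) = I x) {x : V} (hx : x ∈ S.V0) :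
    I (oddInverse e x) = x := by
  rw [oddInverse_apply_of_mem_V0 e hx, ← he, e.apply_symm_apply]

theorem oddInverse_apply_apply (he : ∀ x : S.V1, (e x : V) = I x) {x : V} (hx : x ∈ S.V1) :
    oddInverse e (I x) = x := by
  rw [← he ⟨x, hx⟩, oddInverse_apply_of_mem_V0 e (e ⟨x, hx⟩).2, e.symm_apply_apply]

theorem comp_oddInverse_add_oddInverse_comp (he : ∀ x : S.V1, (e x : V) = I x)
    (hI : ∀ x ∈ S.V0, I x ∈ S.V1) :
    I ∘ₗ oddInverse e + oddInverse e ∘ₗ I = LinearMap.id := by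
  ext x
  obtain ⟨a, ha, b, hb, rfl⟩ := S.exists_add_eq x
  simp only [LinearMap.add_apply, LinearMap.comp_apply, LinearMap.id_apply, map_add,
    apply_oddInverse e he ha, oddInverse_apply_of_mem_V1 e hb,
    oddInverse_apply_of_mem_V1 e (hI a ha), oddInverse_apply_apply e he hb, map_zero]
  abel

theorem isSelfAdj_oddInverse (he : ∀ x : S.V1, (e x : V) = I x)
    (hI : ∀ u ∈ S.V1, ∀ w, S.g (I u) w = S.g u (I w)) :
    S.IsSelfAdj (oddInverse e) := by
  intro p x hx y
  rcases Nat.even_or_odd p with hp | hp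
  · rw [S.homog_iff_mem_V0 hp] at hx
    obtain ⟨a, ha, b, hb, rfl⟩ := S.exists_add_eq y
    have hV1 : S.g (oddInverse e x) b = 0 := S.zero11 _ (oddInverse_mem_V1 e x) b hb
    calc S.g (oddInverse e x) (a + b) = S.g (oddInverse e x) (I (oddInverse e a)) := by
          rw [map_add, hV1, add_zero, apply_oddInverse e he ha]
      _ = S.g x (oddInverse e (a + b)) := by
          rw [← hI _ (oddInverse_mem_V1 e x), apply_oddInverse e he hx, map_add,
            oddInverse_apply_of_mem_V1 e hb, add_zero]
      _ = (-1) ^ p * S.g x (oddInverse e (a + b)) := by rw [hp.neg_one_pow, one_mul]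
  · rw [S.homog_iff_mem_V1 hp] at hx
    rw [oddInverse_apply_of_mem_V1 e hx, map_zero, LinearMap.zero_apply,
      S.zero11 x hx _ (oddInverse_mem_V1 e y), mul_zero]

end oddInverse

end OddSP

theorem homotopyInverse_of_nondegenerate_quadratic_general
    {k V : Type*} [Field k]
    [AddCommGroup V] [Module k V] [FiniteDimensional k V]
    (S : OddSP k V) (I : V →ₗ[k] V)
    (hodd : S.IsOddOp I) (hasa : S.IsAntiSelfAdj I)
    (hnd : ∀ x ∈ S.V1, (∀ y ∈ S.V1, S.g (I x) y = 0) → x = 0) :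
    ∃ It : V →ₗ[k] V, S.IsOddOp It ∧ S.IsSelfAdj It ∧
      I ∘ₗ It + It ∘ₗ I = LinearMap.id := by
  have hinj : ∀ x ∈ S.V1, I x = 0 → x = 0 := fun x hx hIx =>
    hnd x hx fun y _ => by rw [hIx, map_zero, LinearMap.zero_apply]
  let e := OddSP.restrictV1Equiv hodd hinj
  have he : ∀ x : S.V1, (e x : V) = I x := OddSP.coe_restrictV1Equiv_apply hodd hinj
  exact ⟨OddSP.oddInverse e, OddSP.isOddOp_oddInverse e,
    OddSP.isSelfAdj_oddInverse e he fun u hu => hasa.g_apply_eq hu,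
    OddSP.comp_oddInverse_add_oddInverse_comp e he hodd.1⟩

/-- If the symmetric bilinear form `(x,y) ↦ g(Ix,y)` on `V₁` (the
restriction of the even quadratic function `g(Ix,x)` to the even part of `ΠV`) is
non-degenerate, then `I` has an odd self-adjoint homotopy inverse `Ĩ` with
`I∘Ĩ + Ĩ∘I = id`. -/
theorem homotopyInverse_of_nondegenerate_quadratic
    {k V : Type*} [Field k] [IsAlgClosed k] [CharZero k]
    [AddCommGroup V] [Module k V] [FiniteDimensional k V]
    (S : OddSP k V) (I : V →ₗ[k] V)
    (hodd : S.IsOddOp I) (hasa : S.IsAntiSelfAdj I)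
    (hnd : ∀ x ∈ S.V1, (∀ y ∈ S.V1, S.g (I x) y = 0) → x = 0) :
    ∃ It : V →ₗ[k] V, S.IsOddOp It ∧ S.IsSelfAdj It ∧
      I ∘ₗ It + It ∘ₗ I = LinearMap.id :=
  homotopyInverse_of_nondegenerate_quadratic_general S I hodd hasa hnd
end

section
/- Let V be a finite-dimensional ℤ/2ℤ-graded vector space over a field of characteristic zero with an odd symmetric non-degenerate scalar product g, let I be an odd anti-self-adjoint operator on V, and let Ĩ be any odd operator on V with I∘Ĩ + Ĩ∘I = id_V. Then for every homogeneous x ∈ V and every y ∈ V: g(Ĩ(Ix), y) + (−1)^{|x|} g(Ĩx, Iy) = g(x, y). (This identity expresses that the derivation action of I sends the propagator g_Ĩ^{−1} to the inverse form g^{−1}.) -/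
variable {k V : Type*} [Field k] [AddCommGroup V] [Module k V]

/-- If `I` is odd anti-self-adjoint and `Ĩ` is any odd operator with
`I∘Ĩ + Ĩ∘I = id`, then for homogeneous `x` of parity `p` and all `y`:
`g(Ĩ(Ix), y) + (−1)^p g(Ĩx, Iy) = g(x,y)`. -/
theorem derivation_action_on_propagator
    {k V : Type*} [Field k] [CharZero k]
    [AddCommGroup V] [Module k V] [FiniteDimensional k V]
    (S : OddSP k V) (I It : V →ₗ[k] V)
    (hoddI : S.IsOddOp I) (hasa : S.IsAntiSelfAdj I)
    (hoddIt : S.IsOddOp It)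
    (hhom : I ∘ₗ It + It ∘ₗ I = LinearMap.id) :
    ∀ (p : ℕ) (x : V), S.Homog p x → ∀ y : V,
      S.g (It (I x)) y + (-1 : k) ^ p * S.g (It x) (I y) = S.g x y := by
  intro p x hx y
  have hx' : S.Homog (p + 1) (It x) := by
    unfold OddSP.Homog at hx ⊢
    rcases Nat.mod_two_eq_zero_or_one p with h | h <;>
      simp [h, Nat.add_mod] at hx ⊢
    · exact hoddIt.1 x hx
    · exact hoddIt.2 x hx
  have h1 := hasa (p + 1) (It x) hx' y
  have h2 : I (It x) + It (I x) = x := LinearMap.congr_fun hhom x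
  have h3 : S.g x y = S.g (I (It x)) y + S.g (It (I x)) y := by
    conv_lhs => rw [← h2]
    simp
  rw [pow_succ] at h1
  linear_combination -h1 - h3
end

section
/- Let A be a finite-dimensional ℤ/2ℤ-graded associative algebra over a field of characteristic zero with an odd invariant scalar product g. For a ∈ A₀ let K_a and R_a denote left and right multiplication by a (both preserve the grading), and ad_a = K_a − R_a. Then tr(K_a|_{A₁}) = tr(R_a|_{A₀}), consequently str(K_a) = −str(R_a), where str(T) = tr(T|_{A₀}) − tr(T|_{A₁}), and the following three conditions are equivalent: str(K_a) = 0; str(R_a) = 0; str(ad_a) = 0. -/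
/-! The pairing `g(x, y)` between `A₀` and `A₁` is perfect, since `g` is odd and nondegenerate,
and invariance `g(xa, y) = g(x, ay)` makes `R_a|_{A₀}` and `K_a|_{A₁}` adjoint under it; adjoint
endomorphisms have equal traces. Swapping the parities gives `tr(K_a|_{A₀}) = tr(R_a|_{A₁})`,
so `str(ad_a) = −2 str(R_a)`, and `2 ≠ 0` gives the equivalences. -/

/-- A finite-dimensional ℤ/2ℤ-graded associative algebra `A = A₀ ⊕ A₁` (possibly
non-unital) with an odd invariant scalar product `g`: `g` is non-degenerate, vanishes on
`A₀ × A₀` and `A₁ × A₁`, is invariant (`g(ab,c) = g(a,bc)`) and supersymmetric (which,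
given the vanishing on equal parities, amounts to plain symmetry). -/
structure OddFrob (k A : Type*) [Field k] [NonUnitalRing A] [Module k A]
    [SMulCommClass k A A] [IsScalarTower k A A] where
  A0 : Submodule k A
  A1 : Submodule k A
  compl : IsCompl A0 A1
  mul00 : ∀ x ∈ A0, ∀ y ∈ A0, x * y ∈ A0
  mul01 : ∀ x ∈ A0, ∀ y ∈ A1, x * y ∈ A1
  mul10 : ∀ x ∈ A1, ∀ y ∈ A0, x * y ∈ A1
  mul11 : ∀ x ∈ A1, ∀ y ∈ A1, x * y ∈ A0
  g : A →ₗ[k] A →ₗ[k] k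
  nondeg : ∀ x, (∀ y, g x y = 0) → x = 0
  zero00 : ∀ x ∈ A0, ∀ y ∈ A0, g x y = 0
  zero11 : ∀ x ∈ A1, ∀ y ∈ A1, g x y = 0
  invar : ∀ x y z, g (x * y) z = g x (y * z)
  symm : ∀ x y, g x y = g y x

variable {k A : Type*} [Field k] [NonUnitalRing A] [Module k A]
  [SMulCommClass k A A] [IsScalarTower k A A]

/-- `a` is homogeneous of parity `p` (mod 2). -/
def OddFrob.Homog (S : OddFrob k A) (p : ℕ) (a : A) : Prop :=
  if p % 2 = 0 then a ∈ S.A0 else a ∈ S.A1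

/-- Homogeneous dual bases `(e_μ)`, `(e^μ)` of `A`: `e^μ = f μ` is homogeneous of parity
`q μ`, `e_μ = e μ` of the opposite parity, and `g(e^μ, e_ν) = δ^μ_ν`. -/
def OddFrob.DualBases (S : OddFrob k A) {ι : Type*} [Fintype ι] [DecidableEq ι]
    (e : Module.Basis ι k A) (f : ι → A) (q : ι → ℕ) : Prop :=
  (∀ μ, S.Homog (q μ) (f μ)) ∧ (∀ μ, S.Homog (q μ + 1) (e μ)) ∧
  (∀ μ ν, S.g (f μ) (e ν) = if μ = ν then 1 else 0)

namespace LinearMap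

theorem trace_eq_trace_of_isPerfPair {R M N : Type*} [CommRing R] [AddCommGroup M] [Module R M]
    [AddCommGroup N] [Module R N] [Module.Free R N] [Module.Finite R N]
    (p : M →ₗ[R] N →ₗ[R] R) [p.IsPerfPair] (f : M →ₗ[R] M) (h : N →ₗ[R] N)
    (hfh : ∀ x y, p (f x) y = p x (h y)) :
    trace R M f = trace R N h := by
  have hconj : p.toPerfPair.conj f = Module.Dual.transpose (R := R) h := by
    ext φ y
    simpa [Module.Dual.transpose_apply] using hfh (p.toPerfPair.symm φ) y
  rw [← trace_conj' f p.toPerfPair, hconj, trace_transpose']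

variable {K V : Type*} [Field K] [AddCommGroup V] [Module K V] [FiniteDimensional K V]

theorem isPerfPair_domRestrict₁₂_of_isCompl {g : V →ₗ[K] V →ₗ[K] K} (hg : g.Nondegenerate)
    {P Q : Submodule K V} (hPQ : IsCompl P Q) (hP : ∀ x ∈ P, ∀ y ∈ P, g x y = 0)
    (hQ : ∀ x ∈ Q, ∀ y ∈ Q, g x y = 0) : (g.domRestrict₁₂ P Q).IsPerfPair := by
  have hspan : ∀ z : V, ∃ x ∈ P, ∃ y ∈ Q, x + y = z := fun z =>
    Submodule.mem_sup.mp (hPQ.codisjoint.eq_top ▸ Submodule.mem_top)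
  refine .of_injective ((injective_iff_map_eq_zero _).mpr fun v hv => ?_)
    ((injective_iff_map_eq_zero _).mpr fun w hw => ?_)
  · refine Subtype.ext (hg.1 v fun z => ?_)
    obtain ⟨x, hx, y, hy, rfl⟩ := hspan z
    have hvy : g v y = 0 := LinearMap.congr_fun hv ⟨y, hy⟩
    rw [map_add, hP v v.2 x hx, hvy, zero_add]
  · refine Subtype.ext (hg.2 w fun z => ?_)
    obtain ⟨x, hx, y, hy, rfl⟩ := hspan z
    have hxw : g x w = 0 := LinearMap.congr_fun hw ⟨x, hx⟩
    rw [map_add, add_apply, hxw, hQ y hy w w.2, add_zero]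

end LinearMap

theorem trace_restrict_mulLeft_eq_trace_restrict_mulRight [FiniteDimensional k A]
    {g : A →ₗ[k] A →ₗ[k] k} (hg : g.Nondegenerate) (hinv : ∀ x y z, g (x * y) z = g x (y * z))
    {P Q : Submodule k A} (hPQ : IsCompl P Q)
    (hP : ∀ x ∈ P, ∀ y ∈ P, g x y = 0) (hQ : ∀ x ∈ Q, ∀ y ∈ Q, g x y = 0) {a : A}
    (haQ : ∀ y ∈ Q, a * y ∈ Q) (haP : ∀ x ∈ P, x * a ∈ P) :
    LinearMap.trace k Q ((LinearMap.mulLeft k a).restrict haQ) =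
      LinearMap.trace k P ((LinearMap.mulRight k a).restrict haP) := by
  have := LinearMap.isPerfPair_domRestrict₁₂_of_isCompl hg hPQ hP hQ
  exact (LinearMap.trace_eq_trace_of_isPerfPair (g.domRestrict₁₂ P Q) _ _
    fun x y => hinv x a y).symm

/-- For even `a`, with `K_a`, `R_a` left/right multiplication and
`ad_a = K_a − R_a` (all preserving the grading): `tr(K_a|_{A₁}) = tr(R_a|_{A₀})`;
consequently `str(K_a) = −str(R_a)`; and `str(K_a) = 0`, `str(R_a) = 0`, `str(ad_a) = 0`
are equivalent. -/
theorem supertrace_left_right_multiplication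
    {k A : Type*} [Field k] [CharZero k] [NonUnitalRing A] [Module k A]
    [SMulCommClass k A A] [IsScalarTower k A A] [FiniteDimensional k A]
    (S : OddFrob k A) (a : A) (ha : a ∈ S.A0) :
    (LinearMap.trace k ↥S.A1 ((LinearMap.mulLeft k a).restrict
        (fun x hx => by simpa using S.mul01 a ha x hx)) =
      LinearMap.trace k ↥S.A0 ((LinearMap.mulRight k a).restrict
        (fun x hx => by simpa using S.mul00 x hx a ha))) ∧
    ((LinearMap.trace k ↥S.A0 ((LinearMap.mulLeft k a).restrict
        (fun x hx => by simpa using S.mul00 a ha x hx)) -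
      LinearMap.trace k ↥S.A1 ((LinearMap.mulLeft k a).restrict
        (fun x hx => by simpa using S.mul01 a ha x hx))) =
     - (LinearMap.trace k ↥S.A0 ((LinearMap.mulRight k a).restrict
        (fun x hx => by simpa using S.mul00 x hx a ha)) -
        LinearMap.trace k ↥S.A1 ((LinearMap.mulRight k a).restrict
        (fun x hx => by simpa using S.mul10 x hx a ha)))) ∧
    ((LinearMap.trace k ↥S.A0 ((LinearMap.mulLeft k a).restrict
        (fun x hx => by simpa using S.mul00 a ha x hx)) -
      LinearMap.trace k ↥S.A1 ((LinearMap.mulLeft k a).restrict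
        (fun x hx => by simpa using S.mul01 a ha x hx)) = 0 ↔
      LinearMap.trace k ↥S.A0 ((LinearMap.mulRight k a).restrict
        (fun x hx => by simpa using S.mul00 x hx a ha)) -
      LinearMap.trace k ↥S.A1 ((LinearMap.mulRight k a).restrict
        (fun x hx => by simpa using S.mul10 x hx a ha)) = 0) ∧
     (LinearMap.trace k ↥S.A0 ((LinearMap.mulRight k a).restrict
        (fun x hx => by simpa using S.mul00 x hx a ha)) -
      LinearMap.trace k ↥S.A1 ((LinearMap.mulRight k a).restrict
        (fun x hx => by simpa using S.mul10 x hx a ha)) = 0 ↔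
      LinearMap.trace k ↥S.A0 ((LinearMap.mulLeft k a - LinearMap.mulRight k a).restrict
        (fun x hx => by
          simp only [LinearMap.sub_apply, LinearMap.mulLeft_apply, LinearMap.mulRight_apply]
          exact sub_mem (S.mul00 a ha x hx) (S.mul00 x hx a ha))) -
      LinearMap.trace k ↥S.A1 ((LinearMap.mulLeft k a - LinearMap.mulRight k a).restrict
        (fun x hx => by
          simp only [LinearMap.sub_apply, LinearMap.mulLeft_apply, LinearMap.mulRight_apply]
          exact sub_mem (S.mul01 a ha x hx) (S.mul10 x hx a ha))) = 0)) := by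
  have hg : S.g.Nondegenerate := ⟨S.nondeg, fun y hy => S.nondeg y fun x => S.symm y x ▸ hy x⟩
  have hodd := trace_restrict_mulLeft_eq_trace_restrict_mulRight hg S.invar S.compl
    S.zero00 S.zero11 (S.mul01 a ha) (fun x hx => S.mul00 x hx a ha)
  have heven := trace_restrict_mulLeft_eq_trace_restrict_mulRight hg S.invar S.compl.symm
    S.zero11 S.zero00 (S.mul00 a ha) (fun x hx => S.mul10 x hx a ha)
  rw [← LinearMap.restrict_sub (fun x hx => S.mul00 a ha x hx) (fun x hx => S.mul00 x hx a ha),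
    ← LinearMap.restrict_sub (fun y hy => S.mul01 a ha y hy) (fun x hx => S.mul10 x hx a ha),
    map_sub, map_sub, hodd, heven]
  refine ⟨rfl, by ring, ⟨fun h => by linear_combination -h, fun h => by linear_combination -h⟩,
    ⟨fun h => by linear_combination -2 * h, fun h => by linear_combination (-1 / 2 : k) * h⟩⟩
end

section
/- Let k be a field of characteristic zero, N ≥ 1, and λ₁, …, λ_N ∈ k with λ_i + λ_j ≠ 0 for all i, j. In Q(N), realized as block matrices [[A,B],[B,A]], let E^i_j = [[E_ij,0],[0,E_ij]] and ΠE^i_j = [[0,E_ij],[E_ij,0]], where E_ij are the matrix units, and let Λ = [[0,D],[D,0]] with D = ½·diag(λ₁,…,λ_N). Define I on Q(N) as the super-commutator with Λ: I(X) = Λ·X − (−1)^{|X|} X·Λ for homogeneous X, and define Ĩ on Q(N) by Ĩ(E^i_j) = (2/(λ_i+λ_j))·ΠE^i_j and Ĩ(ΠE^i_j) = 0, extended linearly. Then: (i) I is an odd derivation of Q(N) which is anti-self-adjoint for the pairing g(X,Y) = otr(X·Y); (ii) Ĩ is odd and self-adjoint for this pairing; (iii) I∘Ĩ + Ĩ∘I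 = id on Q(N). -/
open Matrix

/-- `2N×2N` matrices over `k`, written in `N×N` block form. -/
abbrev MM (k : Type*) (N : ℕ) := Matrix (Fin N ⊕ Fin N) (Fin N ⊕ Fin N) k

variable (k : Type*) [Field k] (N : ℕ)

/-- The block matrix `J = [[0, 1],[1, 0]]`. -/
noncomputable def Jmat : MM k N := Matrix.fromBlocks 0 1 1 0

/-- The queer matrix superalgebra `Q(N)`: matrices commuting with `J`, i.e. block
matrices `[[A,B],[B,A]]`. -/
noncomputable def QN : Submodule k (MM k N) :=
  LinearMap.ker (LinearMap.mulRight k (Jmat k N) - LinearMap.mulLeft k (Jmat k N))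

/-- The upper-left block, as a linear map. -/
def blk11 : MM k N →ₗ[k] Matrix (Fin N) (Fin N) k where
  toFun X := X.toBlocks₁₁
  map_add' _ _ := rfl
  map_smul' _ _ := rfl

/-- The upper-right block, as a linear map. -/
def blk12 : MM k N →ₗ[k] Matrix (Fin N) (Fin N) k where
  toFun X := X.toBlocks₁₂
  map_add' _ _ := rfl
  map_smul' _ _ := rfl

/-- The lower-left block, as a linear map. -/
def blk21 : MM k N →ₗ[k] Matrix (Fin N) (Fin N) k where
  toFun X := X.toBlocks₂₁
  map_add' _ _ := rfl
  map_smul' _ _ := rfl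

/-- The lower-right block, as a linear map. -/
def blk22 : MM k N →ₗ[k] Matrix (Fin N) (Fin N) k where
  toFun X := X.toBlocks₂₂
  map_add' _ _ := rfl
  map_smul' _ _ := rfl

/-- The even part of `Q(N)`: block matrices `[[A,0],[0,A]]`. -/
noncomputable def QN0 : Submodule k (MM k N) :=
  QN k N ⊓ LinearMap.ker (blk12 k N) ⊓ LinearMap.ker (blk21 k N)

/-- The odd part of `Q(N)`: block matrices `[[0,B],[B,0]]`. -/
noncomputable def QN1 : Submodule k (MM k N) :=
  QN k N ⊓ LinearMap.ker (blk11 k N) ⊓ LinearMap.ker (blk22 k N)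

/-- The odd trace: `otr([[A,B],[B,A]]) = tr B`. -/
noncomputable def otr : MM k N → k := fun X => Matrix.trace X.toBlocks₁₂

/-- `X` is a homogeneous element of `Q(N)` of parity `p`. -/
noncomputable def QHomog (p : ℕ) (X : MM k N) : Prop :=
  if p % 2 = 0 then X ∈ QN0 k N else X ∈ QN1 k N

/-- The even generator `E^i_j = [[E_ij,0],[0,E_ij]]` of `Q(N)`. -/
noncomputable def Emat (i j : Fin N) : MM k N :=
  Matrix.fromBlocks (Matrix.single i j 1) 0 0 (Matrix.single i j 1)

/-- The odd generator `ΠE^i_j = [[0,E_ij],[E_ij,0]]` of `Q(N)`. -/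
noncomputable def PiE (i j : Fin N) : MM k N :=
  Matrix.fromBlocks 0 (Matrix.single i j 1) (Matrix.single i j 1) 0

/-- `Λ = [[0,D],[D,0]]` with `D = ½·diag(λ₁,…,λ_N)`. -/
noncomputable def Lambda (lam : Fin N → k) : MM k N :=
  Matrix.fromBlocks 0 (Matrix.diagonal fun i => lam i / 2)
    (Matrix.diagonal fun i => lam i / 2) 0

/-!
Write an element of `Q(N)` as `qEven A + qOdd B`, i.e. `[[A,B],[B,A]]`. `I` is the
super-commutator with the odd element `Λ`, so the super Leibniz rule is a formal identity
once the grading is multiplicative, and anti-self-adjointness follows from the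
supersymmetry `otr (X * Y) = (-1) ^ (|X| |Y|) * otr (Y * X)`. In blocks, with
`D = diagonal d`, `d i = λ i / 2`, the operator `I` sends `(A, B)` to
`(D B + B D, D A - A D)` and `Ĩ` sends `(A, B)` to `(0, W ⊙ A)` with `W i j = (d i + d j)⁻¹`:
entrywise, `W ⊙ ·` inverts the anticommutator with `D`, which gives `I Ĩ + Ĩ I = id`,
and `Ĩ` is self-adjoint because `W` is symmetric.
-/

def qEven : Matrix (Fin N) (Fin N) k →ₗ[k] MM k N where
  toFun A := fromBlocks A 0 0 A
  map_add' A B := by rw [fromBlocks_add, add_zero]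
  map_smul' c A := by rw [fromBlocks_smul, smul_zero]; rfl

def qOdd : Matrix (Fin N) (Fin N) k →ₗ[k] MM k N where
  toFun B := fromBlocks 0 B B 0
  map_add' A B := by rw [fromBlocks_add, add_zero]
  map_smul' c B := by rw [fromBlocks_smul, smul_zero]; rfl

variable {k N}

section Blocks

variable (A B : Matrix (Fin N) (Fin N) k)

theorem qEven_apply : qEven k N A = fromBlocks A 0 0 A := rfl

theorem qOdd_apply : qOdd k N B = fromBlocks 0 B B 0 := rfl

theorem qEven_single_one (i j : Fin N) : qEven k N (single i j 1) = Emat k N i j := rfl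

theorem qOdd_single_one (i j : Fin N) : qOdd k N (single i j 1) = PiE k N i j := rfl

theorem qEven_mul_qEven : qEven k N A * qEven k N B = qEven k N (A * B) := by
  simp [qEven_apply, fromBlocks_multiply]

theorem qEven_mul_qOdd : qEven k N A * qOdd k N B = qOdd k N (A * B) := by
  simp [qEven_apply, qOdd_apply, fromBlocks_multiply]

theorem qOdd_mul_qEven : qOdd k N A * qEven k N B = qOdd k N (A * B) := by
  simp [qEven_apply, qOdd_apply, fromBlocks_multiply]

theorem qOdd_mul_qOdd : qOdd k N A * qOdd k N B = qEven k N (A * B) := by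
  simp [qEven_apply, qOdd_apply, fromBlocks_multiply]

@[simp]
theorem otr_qEven : otr k N (qEven k N A) = 0 := by
  simp [otr, qEven_apply]

@[simp]
theorem otr_qOdd : otr k N (qOdd k N B) = trace B := by
  simp [otr, qOdd_apply]

theorem otr_zero : otr k N 0 = 0 :=
  trace_zero _ _

theorem otr_add (X Y : MM k N) : otr k N (X + Y) = otr k N X + otr k N Y :=
  (congrArg trace (map_add (blk12 k N) X Y)).trans (trace_add _ _)

theorem otr_sub (X Y : MM k N) : otr k N (X - Y) = otr k N X - otr k N Y :=
  (congrArg trace (map_sub (blk12 k N) X Y)).trans (trace_sub _ _)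

theorem otr_smul (c : k) (X : MM k N) : otr k N (c • X) = c * otr k N X :=
  (congrArg trace (map_smul (blk12 k N) c X)).trans (trace_smul _ _)

theorem qEven_add_qOdd : qEven k N A + qOdd k N B = fromBlocks A B B A := by
  simp [qEven_apply, qOdd_apply, fromBlocks_add]

theorem mem_QN_iff {X : MM k N} : X ∈ QN k N ↔ ∃ A B, X = qEven k N A + qOdd k N B := by
  have hJ : X ∈ QN k N ↔ X * Jmat k N = Jmat k N * X := by simp [QN, sub_eq_zero]
  simp only [hJ, qEven_add_qOdd]
  constructor
  · intro h
    rw [← fromBlocks_toBlocks X, Jmat] at h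
    simp only [fromBlocks_multiply, fromBlocks_inj, mul_zero, mul_one, zero_mul, one_mul,
      add_zero, zero_add] at h
    refine ⟨X.toBlocks₁₁, X.toBlocks₁₂, ?_⟩
    conv_lhs => rw [← fromBlocks_toBlocks X, ← h.1, ← h.2.1]
  · rintro ⟨A, B, rfl⟩
    simp [Jmat, fromBlocks_multiply]

theorem qEven_mem_QN0 : qEven k N A ∈ QN0 k N :=
  ⟨⟨mem_QN_iff.2 ⟨A, 0, by rw [map_zero, add_zero]⟩, toBlocks_fromBlocks₁₂ ..⟩,
    toBlocks_fromBlocks₂₁ ..⟩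

theorem qOdd_mem_QN1 : qOdd k N B ∈ QN1 k N :=
  ⟨⟨mem_QN_iff.2 ⟨0, B, by rw [map_zero, zero_add]⟩, toBlocks_fromBlocks₁₁ ..⟩,
    toBlocks_fromBlocks₂₂ ..⟩

theorem mem_QN0_iff {X : MM k N} : X ∈ QN0 k N ↔ ∃ A, X = qEven k N A := by
  refine ⟨fun h => ?_, by rintro ⟨A, rfl⟩; exact qEven_mem_QN0 A⟩
  obtain ⟨⟨hX, hB⟩, -⟩ := h
  obtain ⟨A, B, rfl⟩ := mem_QN_iff.1 hX
  obtain rfl : B = 0 := by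
    rw [← toBlocks_fromBlocks₁₂ A B B A, ← qEven_add_qOdd]; exact hB
  exact ⟨A, by rw [map_zero, add_zero]⟩

theorem mem_QN1_iff {X : MM k N} : X ∈ QN1 k N ↔ ∃ B, X = qOdd k N B := by
  refine ⟨fun h => ?_, by rintro ⟨B, rfl⟩; exact qOdd_mem_QN1 B⟩
  obtain ⟨⟨hX, hA⟩, -⟩ := h
  obtain ⟨A, B, rfl⟩ := mem_QN_iff.1 hX
  obtain rfl : A = 0 := by
    rw [← toBlocks_fromBlocks₁₁ A B B A, ← qEven_add_qOdd]; exact hA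
  exact ⟨B, by rw [map_zero, zero_add]⟩

end Blocks

section Grading

variable {p q : ℕ} {X Y : MM k N}

theorem qHomog_qEven (hp : Even p) (A : Matrix (Fin N) (Fin N) k) :
    QHomog k N p (qEven k N A) := by
  simpa [QHomog, Nat.even_iff.1 hp] using qEven_mem_QN0 A

theorem qHomog_qOdd (hp : Odd p) (B : Matrix (Fin N) (Fin N) k) :
    QHomog k N p (qOdd k N B) := by
  simpa [QHomog, Nat.odd_iff.1 hp] using qOdd_mem_QN1 B

theorem QHomog.eq_qEven_or_eq_qOdd (hX : QHomog k N p X) :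
    (Even p ∧ ∃ A, X = qEven k N A) ∨ (Odd p ∧ ∃ B, X = qOdd k N B) := by
  rcases Nat.even_or_odd p with hp | hp
  · simp only [QHomog, Nat.even_iff.1 hp, if_true, mem_QN0_iff] at hX
    exact .inl ⟨hp, hX⟩
  · simp only [QHomog, Nat.odd_iff.1 hp, one_ne_zero, if_false, mem_QN1_iff] at hX
    exact .inr ⟨hp, hX⟩

theorem QHomog.mul (hX : QHomog k N p X) (hY : QHomog k N q Y) :
    QHomog k N (p + q) (X * Y) := by
  rcases hX.eq_qEven_or_eq_qOdd with ⟨hp, A, rfl⟩ | ⟨hp, A, rfl⟩ <;>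
    rcases hY.eq_qEven_or_eq_qOdd with ⟨hq, B, rfl⟩ | ⟨hq, B, rfl⟩
  · exact qEven_mul_qEven A B ▸ qHomog_qEven (hp.add hq) _
  · exact qEven_mul_qOdd A B ▸ qHomog_qOdd (hp.add_odd hq) _
  · exact qOdd_mul_qEven A B ▸ qHomog_qOdd (hp.add_even hq) _
  · exact qOdd_mul_qOdd A B ▸ qHomog_qEven (hp.add_odd hq) _

theorem exists_qHomog_add_of_mem_QN (hY : Y ∈ QN k N) :
    ∃ Y₀ Y₁, QHomog k N 0 Y₀ ∧ QHomog k N 1 Y₁ ∧ Y = Y₀ + Y₁ := by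
  obtain ⟨A, B, rfl⟩ := mem_QN_iff.1 hY
  exact ⟨_, _, qHomog_qEven Even.zero A, qHomog_qOdd odd_one B, rfl⟩

theorem otr_mul_comm_of_qHomog (hX : QHomog k N p X) (hY : QHomog k N q Y) :
    otr k N (X * Y) = (-1 : k) ^ (p * q) * otr k N (Y * X) := by
  rcases hX.eq_qEven_or_eq_qOdd with ⟨hp, A, rfl⟩ | ⟨hp, A, rfl⟩ <;>
    rcases hY.eq_qEven_or_eq_qOdd with ⟨hq, B, rfl⟩ | ⟨hq, B, rfl⟩
  · simp [qEven_mul_qEven]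
  · rw [qEven_mul_qOdd, qOdd_mul_qEven, otr_qOdd, otr_qOdd, (hp.mul_right q).neg_one_pow,
      one_mul, trace_mul_comm]
  · rw [qOdd_mul_qEven, qEven_mul_qOdd, otr_qOdd, otr_qOdd, (hq.mul_left p).neg_one_pow,
      one_mul, trace_mul_comm]
  · simp [qOdd_mul_qOdd]

end Grading

section SuperCommutator

variable {T : MM k N →ₗ[k] MM k N} {L : MM k N} {p : ℕ} {X Y : MM k N}

theorem apply_eq_superCommutator (hT0 : ∀ X ∈ QN0 k N, T X = L * X - X * L)
    (hT1 : ∀ X ∈ QN1 k N, T X = L * X + X * L) (hX : QHomog k N p X) :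
    T X = L * X - (-1 : k) ^ p • (X * L) := by
  rcases Nat.even_or_odd p with hp | hp
  · rw [hp.neg_one_pow, one_smul]
    exact hT0 X (by simpa [QHomog, Nat.even_iff.1 hp] using hX)
  · rw [hp.neg_one_pow, neg_one_smul, sub_neg_eq_add]
    exact hT1 X (by simpa [QHomog, Nat.odd_iff.1 hp] using hX)

theorem map_mul_of_superCommutator
    (hT : ∀ p X, QHomog k N p X → T X = L * X - (-1 : k) ^ p • (X * L))
    (hX : QHomog k N p X) (hY : Y ∈ QN k N) :
    T (X * Y) = T X * Y + (-1 : k) ^ p • (X * T Y) := by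
  have homog : ∀ q Y, QHomog k N q Y → T (X * Y) = T X * Y + (-1 : k) ^ p • (X * T Y) := by
    intro q Y hY
    rw [hT _ _ (hX.mul hY), hT p X hX, hT q Y hY]
    simp only [sub_mul, mul_sub, smul_sub, smul_mul_assoc, mul_smul_comm, smul_smul, ← pow_add,
      mul_assoc]
    abel
  obtain ⟨Y₀, Y₁, h₀, h₁, rfl⟩ := exists_qHomog_add_of_mem_QN hY
  rw [mul_add, map_add, homog 0 Y₀ h₀, homog 1 Y₁ h₁, map_add, mul_add, mul_add, smul_add]
  abel

theorem otr_map_mul_add_otr_mul_map_of_superCommutator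
    (hT : ∀ p X, QHomog k N p X → T X = L * X - (-1 : k) ^ p • (X * L))
    (hL : QHomog k N 1 L) (hX : QHomog k N p X) (hY : Y ∈ QN k N) :
    otr k N (T X * Y) + (-1 : k) ^ p * otr k N (X * T Y) = 0 := by
  have homog : ∀ q Y, QHomog k N q Y →
      otr k N (T X * Y) + (-1 : k) ^ p * otr k N (X * T Y) = 0 := by
    intro q Y hY
    -- the sum telescopes to `otr (L * (X * Y)) - (-1) ^ (p + q) * otr (X * Y * L)`
    have hsym := otr_mul_comm_of_qHomog hL (hX.mul hY)
    rw [hT p X hX, hT q Y hY]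
    simp only [sub_mul, mul_sub, smul_mul_assoc, mul_smul_comm, otr_sub, otr_smul,
      mul_assoc] at hsym ⊢
    linear_combination hsym
  obtain ⟨Y₀, Y₁, h₀, h₁, rfl⟩ := exists_qHomog_add_of_mem_QN hY
  rw [mul_add, map_add, mul_add, otr_add, otr_add]
  linear_combination homog 0 Y₀ h₀ + homog 1 Y₁ h₁

end SuperCommutator

section Hadamard

variable {n K : Type*} [Field K]

def pairSumInv (d : n → K) : Matrix n n K := of fun i j => (d i + d j)⁻¹

theorem pairSumInv_transpose (d : n → K) : (pairSumInv d)ᵀ = pairSumInv d := by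
  ext i j
  simp [pairSumInv, add_comm]

variable [Fintype n] [DecidableEq n] {d : n → K}

theorem diagonal_mul_add_mul_diagonal_apply (d : n → K) (A : Matrix n n K) (i j : n) :
    (diagonal d * A + A * diagonal d) i j = (d i + d j) * A i j := by
  rw [Matrix.add_apply, diagonal_mul, mul_diagonal, add_mul, mul_comm (A i j)]

theorem diagonal_mul_add_mul_diagonal_pairSumInv_hadamard (hd : ∀ i j, d i + d j ≠ 0)
    (A : Matrix n n K) :
    diagonal d * (pairSumInv d ⊙ A) + pairSumInv d ⊙ A * diagonal d = A := by
  ext i j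
  rw [diagonal_mul_add_mul_diagonal_apply, hadamard_apply, pairSumInv, of_apply,
    mul_inv_cancel_left₀ (hd i j)]

theorem pairSumInv_hadamard_diagonal_mul_add_mul_diagonal (hd : ∀ i j, d i + d j ≠ 0)
    (B : Matrix n n K) :
    pairSumInv d ⊙ (diagonal d * B + B * diagonal d) = B := by
  ext i j
  rw [hadamard_apply, diagonal_mul_add_mul_diagonal_apply, pairSumInv, of_apply,
    inv_mul_cancel_left₀ (hd i j)]

end Hadamard

theorem trace_hadamard_mul_of_transpose_eq {n R : Type*} [Fintype n] [CommSemiring R]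
    {W : Matrix n n R} (hW : Wᵀ = W) (A B : Matrix n n R) :
    trace (W ⊙ A * B) = trace (A * (W ⊙ B)) := by
  simp only [trace, diag_apply, mul_apply, hadamard_apply]
  refine Finset.sum_congr rfl fun i _ => Finset.sum_congr rfl fun j _ => ?_
  rw [← congr_fun₂ hW i j, transpose_apply]
  ring

theorem hadamard_single {n R : Type*} [DecidableEq n] [MulZeroClass R] (W : Matrix n n R)
    (i j : n) (x : R) : W ⊙ single i j x = single i j (W i j * x) := by
  ext a b
  by_cases h : i = a ∧ j = b
  · obtain ⟨rfl, rfl⟩ := h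
    simp
  · simp [h]

section OddOperators

variable {T : MM k N →ₗ[k] MM k N} {W : Matrix (Fin N) (Fin N) k}

theorem map_qEven_of_map_Emat (hT : ∀ i j, T (Emat k N i j) = W i j • PiE k N i j)
    (A : Matrix (Fin N) (Fin N) k) : T (qEven k N A) = qOdd k N (W ⊙ A) := by
  induction A using Matrix.induction_on' with
  | h_zero => simp
  | h_add A B hA hB => rw [map_add, map_add, hA, hB, hadamard_add, map_add]
  | h_std_basis i j x =>
    have hEmat : qEven k N (single i j x) = x • Emat k N i j := by
      rw [← qEven_single_one, ← map_smul, smul_single, smul_eq_mul, mul_one]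
    have hPiE : single i j (W i j * x) = (x * W i j) • single i j 1 := by
      rw [smul_single, smul_eq_mul, mul_one, mul_comm]
    rw [hEmat, map_smul, hT, smul_smul, hadamard_single, hPiE, map_smul, qOdd_single_one]

theorem map_qOdd_of_map_PiE (hT : ∀ i j, T (PiE k N i j) = 0) (B : Matrix (Fin N) (Fin N) k) :
    T (qOdd k N B) = 0 := by
  induction B using Matrix.induction_on' with
  | h_zero => simp
  | h_add A B hA hB => rw [map_add, map_add, hA, hB, add_zero]
  | h_std_basis i j x =>
    have hPiE : qOdd k N (single i j x) = x • PiE k N i j := by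
      rw [← qOdd_single_one, ← map_smul, smul_single, smul_eq_mul, mul_one]
    rw [hPiE, map_smul, hT, smul_zero]

theorem otr_map_mul_eq_otr_mul_map (hTev : ∀ A, T (qEven k N A) = qOdd k N (W ⊙ A))
    (hTod : ∀ B, T (qOdd k N B) = 0) (hW : Wᵀ = W) {p : ℕ} {X Y : MM k N}
    (hX : QHomog k N p X) (hY : Y ∈ QN k N) :
    otr k N (T X * Y) = (-1 : k) ^ p * otr k N (X * T Y) := by
  obtain ⟨A', B', rfl⟩ := mem_QN_iff.1 hY
  rw [map_add, hTev, hTod, add_zero]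
  rcases hX.eq_qEven_or_eq_qOdd with ⟨hp, A, rfl⟩ | ⟨hp, B, rfl⟩
  · rw [hTev, hp.neg_one_pow, one_mul, mul_add, qOdd_mul_qEven, qOdd_mul_qOdd, otr_add,
      otr_qOdd, otr_qEven, add_zero, qEven_mul_qOdd, otr_qOdd,
      trace_hadamard_mul_of_transpose_eq hW]
  · rw [hTod, qOdd_mul_qOdd, otr_qEven, mul_zero, zero_mul, otr_zero]

end OddOperators

theorem map_map_add_map_map_eq_self {I T : MM k N →ₗ[k] MM k N} {d : Fin N → k}
    (hd : ∀ i j, d i + d j ≠ 0)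
    (hIev : ∀ A, I (qEven k N A) = qOdd k N (diagonal d * A - A * diagonal d))
    (hIod : ∀ B, I (qOdd k N B) = qEven k N (diagonal d * B + B * diagonal d))
    (hTev : ∀ A, T (qEven k N A) = qOdd k N (pairSumInv d ⊙ A))
    (hTod : ∀ B, T (qOdd k N B) = 0) {X : MM k N} (hX : X ∈ QN k N) :
    I (T X) + T (I X) = X := by
  obtain ⟨A, B, rfl⟩ := mem_QN_iff.1 hX
  rw [map_add T, hTev, hTod, add_zero, hIod, map_add I, hIev, hIod, map_add T, hTev, hTod,
    zero_add, diagonal_mul_add_mul_diagonal_pairSumInv_hadamard hd,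
    pairSumInv_hadamard_diagonal_mul_add_mul_diagonal hd]

theorem queer_algebra_supersymmetry_general
    (k : Type*) [Field k] [CharZero k] (N : ℕ)
    (lam : Fin N → k) (hlam : ∀ i j, lam i + lam j ≠ 0)
    (Iop Itil : MM k N →ₗ[k] MM k N)
    (hI0 : ∀ X ∈ QN0 k N, Iop X = Lambda k N lam * X - X * Lambda k N lam)
    (hI1 : ∀ X ∈ QN1 k N, Iop X = Lambda k N lam * X + X * Lambda k N lam)
    (hItE : ∀ i j, Itil (Emat k N i j) = (2 * (lam i + lam j)⁻¹) • PiE k N i j)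
    (hItPi : ∀ i j, Itil (PiE k N i j) = 0) :
    ((∀ X ∈ QN0 k N, Iop X ∈ QN1 k N) ∧ (∀ X ∈ QN1 k N, Iop X ∈ QN0 k N) ∧
     (∀ (p : ℕ) (X : MM k N), QHomog k N p X → ∀ Y ∈ QN k N,
        Iop (X * Y) = Iop X * Y + (-1 : k) ^ p • (X * Iop Y)) ∧
     (∀ (p : ℕ) (X : MM k N), QHomog k N p X → ∀ Y ∈ QN k N,
        otr k N (Iop X * Y) + (-1 : k) ^ p * otr k N (X * Iop Y) = 0)) ∧
    ((∀ X ∈ QN0 k N, Itil X ∈ QN1 k N) ∧ (∀ X ∈ QN1 k N, Itil X ∈ QN0 k N) ∧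
     (∀ (p : ℕ) (X : MM k N), QHomog k N p X → ∀ Y ∈ QN k N,
        otr k N (Itil X * Y) = (-1 : k) ^ p * otr k N (X * Itil Y))) ∧
    (∀ X ∈ QN k N, Iop (Itil X) + Itil (Iop X) = X) := by
  set d : Fin N → k := fun i => lam i / 2
  have hd : ∀ i j, d i + d j ≠ 0 := fun i j => by
    simpa only [d, ← add_div] using div_ne_zero (hlam i j) two_ne_zero
  have hΛ : Lambda k N lam = qOdd k N (diagonal d) := rfl
  have hI := fun p X => apply_eq_superCommutator (p := p) (X := X) hI0 hI1
  have hIev : ∀ A, Iop (qEven k N A) = qOdd k N (diagonal d * A - A * diagonal d) := fun A => by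
    rw [hI0 _ (qEven_mem_QN0 A), hΛ, qOdd_mul_qEven, qEven_mul_qOdd, map_sub]
  have hIod : ∀ B, Iop (qOdd k N B) = qEven k N (diagonal d * B + B * diagonal d) := fun B => by
    rw [hI1 _ (qOdd_mem_QN1 B), hΛ, qOdd_mul_qOdd, qOdd_mul_qOdd, map_add]
  have hTev : ∀ A, Itil (qEven k N A) = qOdd k N (pairSumInv d ⊙ A) := by
    refine map_qEven_of_map_Emat fun i j => ?_
    rw [hItE, pairSumInv, of_apply, ← add_div, inv_div, div_eq_mul_inv]
  have hTod := map_qOdd_of_map_PiE hItPi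
  refine ⟨⟨fun X hX => ?_, fun X hX => ?_, fun p X hX Y hY => map_mul_of_superCommutator hI hX hY,
    fun p X hX Y hY => otr_map_mul_add_otr_mul_map_of_superCommutator hI
      (qHomog_qOdd odd_one (diagonal d)) hX hY⟩,
    ⟨fun X hX => ?_, fun X hX => ?_, fun p X hX Y hY =>
      otr_map_mul_eq_otr_mul_map hTev hTod (pairSumInv_transpose d) hX hY⟩,
    fun X hX => map_map_add_map_map_eq_self hd hIev hIod hTev hTod hX⟩
  · obtain ⟨A, rfl⟩ := mem_QN0_iff.1 hX
    exact hIev A ▸ qOdd_mem_QN1 _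
  · obtain ⟨B, rfl⟩ := mem_QN1_iff.1 hX
    exact hIod B ▸ qEven_mem_QN0 _
  · obtain ⟨A, rfl⟩ := mem_QN0_iff.1 hX
    exact hTev A ▸ qOdd_mem_QN1 _
  · obtain ⟨B, rfl⟩ := mem_QN1_iff.1 hX
    exact hTod B ▸ zero_mem _

/-- Let `I` be the super-commutator with `Λ` (`I X = ΛX − XΛ` on even
`X`, `I X = ΛX + XΛ` on odd `X`) and `Ĩ` be determined by
`Ĩ(E^i_j) = (2/(λ_i+λ_j))·ΠE^i_j`, `Ĩ(ΠE^i_j) = 0`. Then on `Q(N)`: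
(i) `I` is an odd derivation, anti-self-adjoint for `g(X,Y) = otr(XY)`;
(ii) `Ĩ` is odd and self-adjoint; (iii) `I∘Ĩ + Ĩ∘I = id`. -/
theorem queer_algebra_supersymmetry
    (k : Type*) [Field k] [CharZero k] (N : ℕ) (hN : 1 ≤ N)
    (lam : Fin N → k) (hlam : ∀ i j, lam i + lam j ≠ 0)
    (Iop Itil : MM k N →ₗ[k] MM k N)
    (hI0 : ∀ X ∈ QN0 k N, Iop X = Lambda k N lam * X - X * Lambda k N lam)
    (hI1 : ∀ X ∈ QN1 k N, Iop X = Lambda k N lam * X + X * Lambda k N lam)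
    (hItE : ∀ i j, Itil (Emat k N i j) = (2 * (lam i + lam j)⁻¹) • PiE k N i j)
    (hItPi : ∀ i j, Itil (PiE k N i j) = 0) :
    ((∀ X ∈ QN0 k N, Iop X ∈ QN1 k N) ∧ (∀ X ∈ QN1 k N, Iop X ∈ QN0 k N) ∧
     (∀ (p : ℕ) (X : MM k N), QHomog k N p X → ∀ Y ∈ QN k N,
        Iop (X * Y) = Iop X * Y + (-1 : k) ^ p • (X * Iop Y)) ∧
     (∀ (p : ℕ) (X : MM k N), QHomog k N p X → ∀ Y ∈ QN k N,
        otr k N (Iop X * Y) + (-1 : k) ^ p * otr k N (X * Iop Y) = 0)) ∧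
    ((∀ X ∈ QN0 k N, Itil X ∈ QN1 k N) ∧ (∀ X ∈ QN1 k N, Itil X ∈ QN0 k N) ∧
     (∀ (p : ℕ) (X : MM k N), QHomog k N p X → ∀ Y ∈ QN k N,
        otr k N (Itil X * Y) = (-1 : k) ^ p * otr k N (X * Itil Y))) ∧
    (∀ X ∈ QN k N, Iop (Itil X) + Itil (Iop X) = X) :=
  queer_algebra_supersymmetry_general k N lam hlam Iop Itil hI0 hI1 hItE hItPi
end
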